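/- arXiv:1808.04196 — 7 statements merged into one kernel-verified Lean document; each statement's English description precedes it below -/
import Mathlib

section
/- The avalanche size distribution sums to one: the sum over k from 0 to N of binomial(N,k) * p^k * (1-(k+1)p)^(N-k) * (k+1)^(k-1) equals 1, when p = 1/(M) with M ≥ N+1 (in particular for p = 1/(N+1)). -/
open Polynomial Finset

/-- Alternating binomial sum against `k ^ d` vanishes when `d < n`. -/
lemma alt_sum_pow : ∀ d n : ℕ, d < n →
    ∑ k ∈ Finset.range (n + 1), (-1 : ℝ) ^ k * (n.choose k : ℝ) * (k : ℝ) ^ d = 0 := by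
  intro d
  induction d using Nat.strong_induction_on with
  | _ d ih =>
    cases d with
    | zero =>
      intro n hn
      simp only [pow_zero, mul_one]
      have h := Int.alternating_sum_range_choose_of_ne (by omega : n ≠ 0)
      exact_mod_cast congrArg (fun z : ℤ => (z : ℝ)) h
    | succ d =>
      intro n hn
      obtain ⟨m, rfl⟩ : ∃ m, n = m + 1 := ⟨n - 1, by omega⟩
      rw [Finset.sum_range_succ']
      have h0 : (-1 : ℝ) ^ 0 * ((m + 1).choose 0 : ℝ) * ((0 : ℕ) : ℝ) ^ (d + 1) = 0 := by
        simp
      rw [h0, add_zero]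
      have key : ∀ i ∈ Finset.range (m + 1),
          (-1 : ℝ) ^ (i + 1) * ((m + 1).choose (i + 1) : ℝ) * (((i : ℕ) + 1 : ℕ) : ℝ) ^ (d + 1)
            = ∑ j ∈ Finset.range (d + 1),
                (-((m : ℝ) + 1)) * (d.choose j : ℝ)
                  * ((-1 : ℝ) ^ i * (m.choose i : ℝ) * (i : ℝ) ^ j) := by
        intro i _
        have hc : ((m + 1).choose (i + 1) * (i + 1) : ℕ) = (m + 1) * m.choose i :=
          (Nat.add_one_mul_choose_eq m i).symm
        have hcR : ((m + 1).choose (i + 1) : ℝ) * ((i : ℝ) + 1) = ((m : ℝ) + 1) * (m.choose i : ℝ) := by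
          exact_mod_cast congrArg (fun z : ℕ => (z : ℝ)) hc
        have hb : ((i : ℝ) + 1) ^ d = ∑ j ∈ Finset.range (d + 1), (i : ℝ) ^ j * (d.choose j : ℝ) := by
          have := add_pow (i : ℝ) 1 d
          simpa using this
        push_cast
        calc (-1 : ℝ) ^ (i + 1) * ((m + 1).choose (i + 1) : ℝ) * ((i : ℝ) + 1) ^ (d + 1)
            = (-1 : ℝ) ^ i * (((m + 1).choose (i + 1) : ℝ) * ((i : ℝ) + 1)) * ((i : ℝ) + 1) ^ d
                * (-1) := by ring
          _ = (-1 : ℝ) ^ i * (((m : ℝ) + 1) * (m.choose i : ℝ))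
                * (∑ j ∈ Finset.range (d + 1), (i : ℝ) ^ j * (d.choose j : ℝ)) * (-1) := by
              rw [hcR, hb]
          _ = ∑ j ∈ Finset.range (d + 1),
                (-((m : ℝ) + 1)) * (d.choose j : ℝ)
                  * ((-1 : ℝ) ^ i * (m.choose i : ℝ) * (i : ℝ) ^ j) := by
              rw [Finset.mul_sum, Finset.sum_mul]
              exact Finset.sum_congr rfl fun j _ => by ring
      rw [Finset.sum_congr rfl key, Finset.sum_comm]
      apply Finset.sum_eq_zero
      intro j hj
      have hj' : j < d + 1 := Finset.mem_range.mp hj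
      rw [← Finset.mul_sum, ih j (by omega) m (by omega)]
      ring

/-- The Abel-type polynomial identity
`∑ C(n,k) (k+1)^{k-1} (X - k)^{n-k} = (X + 1)^n`. -/
lemma abel_poly : ∀ n : ℕ,
    ∑ k ∈ Finset.range (n + 1),
        C ((n.choose k : ℝ) * (((k + 1) ^ (k - 1) : ℕ) : ℝ)) * (X - C (k : ℝ)) ^ (n - k)
      = (X + 1) ^ n := by
  intro n
  induction n with
  | zero => simp
  | succ n ihn =>
    set P : ℝ[X] := ∑ k ∈ Finset.range (n + 2),
        C (((n + 1).choose k : ℝ) * (((k + 1) ^ (k - 1) : ℕ) : ℝ)) * (X - C (k : ℝ)) ^ (n + 1 - k)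
      with hP
    have hD : derivative P = derivative ((X + 1 : ℝ[X]) ^ (n + 1)) := by
      rw [hP, derivative_sum]
      have hterm : ∀ k ∈ Finset.range (n + 2),
          derivative (C (((n + 1).choose k : ℝ) * (((k + 1) ^ (k - 1) : ℕ) : ℝ))
              * (X - C (k : ℝ)) ^ (n + 1 - k))
            = C ((n : ℝ) + 1) *
              (if k ≤ n then C ((n.choose k : ℝ) * (((k + 1) ^ (k - 1) : ℕ) : ℝ))
                  * (X - C (k : ℝ)) ^ (n - k) else 0) := by
        intro k hk
        rw [derivative_C_mul, derivative_pow]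
        by_cases hkn : k ≤ n
        · rw [if_pos hkn]
          have hsub : n + 1 - k - 1 = n - k := by omega
          have hd1 : derivative (X - C (k : ℝ)) = 1 := by simp
          rw [hd1, mul_one, hsub]
          have hccast : ((n + 1 - k : ℕ) : ℝ) * ((n + 1).choose k : ℝ) = ((n : ℝ) + 1) * (n.choose k : ℝ) := by
            have := Nat.choose_mul_succ_eq n k
            have h2 : ((n.choose k * (n + 1) : ℕ) : ℝ) = (((n + 1).choose k * (n + 1 - k) : ℕ) : ℝ) := by
              exact_mod_cast congrArg (fun z : ℕ => (z : ℝ)) this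
            push_cast at h2
            linarith [h2]
          have hC : C (((n + 1).choose k : ℝ) * (((k + 1) ^ (k - 1) : ℕ) : ℝ))
                * C (((n + 1 - k : ℕ) : ℝ))
              = C ((n : ℝ) + 1) * C ((n.choose k : ℝ) * (((k + 1) ^ (k - 1) : ℕ) : ℝ)) := by
            rw [← C_mul, ← C_mul]
            congr 1
            linear_combination (((k + 1) ^ (k - 1) : ℕ) : ℝ) * hccast
          linear_combination ((X : ℝ[X]) - C ((k : ℕ) : ℝ)) ^ (n - k) * hC
        · rw [if_neg hkn]
          have hk1 : k = n + 1 := by simp at hk; omega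
          subst hk1
          simp
      rw [Finset.sum_congr rfl hterm, ← Finset.mul_sum]
      have : ∑ k ∈ Finset.range (n + 2),
          (if k ≤ n then C ((n.choose k : ℝ) * (((k + 1) ^ (k - 1) : ℕ) : ℝ))
              * (X - C (k : ℝ)) ^ (n - k) else 0)
          = ∑ k ∈ Finset.range (n + 1),
              C ((n.choose k : ℝ) * (((k + 1) ^ (k - 1) : ℕ) : ℝ)) * (X - C (k : ℝ)) ^ (n - k) := by
        rw [Finset.sum_range_succ, if_neg (by omega), add_zero]
        apply Finset.sum_congr rfl
        intro k hk
        rw [if_pos (by have := Finset.mem_range.mp hk; omega)]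
      rw [this, ihn, derivative_pow]
      simp [mul_comm]
    have hdiff : P - (X + 1 : ℝ[X]) ^ (n + 1) = C ((P - (X + 1 : ℝ[X]) ^ (n + 1)).coeff 0) := by
      apply eq_C_of_derivative_eq_zero
      rw [derivative_sub, hD, sub_self]
    have heval : (P - (X + 1 : ℝ[X]) ^ (n + 1)).eval (-1) = 0 := by
      rw [eval_sub, eval_pow, eval_add, eval_X, eval_one, neg_add_cancel,
        zero_pow (Nat.succ_ne_zero n), sub_zero, hP, eval_finset_sum]
      have hterm : ∀ k ∈ Finset.range (n + 2),
          (C (((n + 1).choose k : ℝ) * (((k + 1) ^ (k - 1) : ℕ) : ℝ))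
              * (X - C (k : ℝ)) ^ (n + 1 - k)).eval (-1)
            = (-1 : ℝ) ^ (n + 1) * ∑ j ∈ Finset.range (n + 1),
                ((n + 1).choose k : ℝ) * (n.choose j : ℝ) * ((-1 : ℝ) ^ k * (k : ℝ) ^ j) := by
        intro k hk
        have hk' : k ≤ n + 1 := by simp at hk; omega
        rw [eval_mul, eval_C, eval_pow, eval_sub, eval_X, eval_C]
        have h1 : (-1 - (k : ℝ)) = (-1) * ((k : ℝ) + 1) := by ring
        rw [h1, mul_pow]
        have h2 : (((k + 1) ^ (k - 1) : ℕ) : ℝ) * ((k : ℝ) + 1) ^ (n + 1 - k)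
            = ((k : ℝ) + 1) ^ n := by
          cases k with
          | zero => simp
          | succ k' =>
            have e2 : k' + 1 - 1 = k' := rfl
            have hc : (((k' + 1 + 1) ^ (k' + 1 - 1) : ℕ) : ℝ)
                = (((k' + 1 : ℕ) : ℝ) + 1) ^ k' := by
              rw [e2]; push_cast; ring
            rw [hc, ← pow_add]
            congr 1
            omega
        have h3 : (-1 : ℝ) ^ (n + 1 - k) = (-1) ^ (n + 1) * (-1) ^ k := by
          have hone : (-1 : ℝ) ^ k * (-1 : ℝ) ^ k = 1 := by
            rw [← pow_add]; exact Even.neg_one_pow ⟨k, rfl⟩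
          calc (-1 : ℝ) ^ (n + 1 - k)
              = (-1 : ℝ) ^ (n + 1 - k) * ((-1 : ℝ) ^ k * (-1 : ℝ) ^ k) := by rw [hone, mul_one]
            _ = ((-1 : ℝ) ^ (n + 1 - k) * (-1 : ℝ) ^ k) * (-1 : ℝ) ^ k := by ring
            _ = (-1 : ℝ) ^ (n + 1) * (-1 : ℝ) ^ k := by
                rw [← pow_add, show n + 1 - k + k = n + 1 by omega]
        have h4 : ((k : ℝ) + 1) ^ n = ∑ j ∈ Finset.range (n + 1), (k : ℝ) ^ j * (n.choose j : ℝ) := by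
          have := add_pow (k : ℝ) 1 n
          simpa using this
        calc (((n + 1).choose k : ℝ) * (((k + 1) ^ (k - 1) : ℕ) : ℝ))
              * ((-1 : ℝ) ^ (n + 1 - k) * ((k : ℝ) + 1) ^ (n + 1 - k))
            = ((n + 1).choose k : ℝ) * ((-1 : ℝ) ^ (n + 1 - k))
                * ((((k + 1) ^ (k - 1) : ℕ) : ℝ) * ((k : ℝ) + 1) ^ (n + 1 - k)) := by ring
          _ = ((n + 1).choose k : ℝ) * ((-1) ^ (n + 1) * (-1) ^ k)
                * (∑ j ∈ Finset.range (n + 1), (k : ℝ) ^ j * (n.choose j : ℝ)) := by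
              rw [h2, h3, h4]
          _ = (-1 : ℝ) ^ (n + 1) * ∑ j ∈ Finset.range (n + 1),
                ((n + 1).choose k : ℝ) * (n.choose j : ℝ) * ((-1 : ℝ) ^ k * (k : ℝ) ^ j) := by
              rw [Finset.mul_sum, Finset.mul_sum]
              exact Finset.sum_congr rfl fun j _ => by ring
      rw [Finset.sum_congr rfl hterm, ← Finset.mul_sum, Finset.sum_comm]
      have hz : ∑ j ∈ Finset.range (n + 1), ∑ k ∈ Finset.range (n + 2),
          ((n + 1).choose k : ℝ) * (n.choose j : ℝ) * ((-1 : ℝ) ^ k * (k : ℝ) ^ j) = 0 := by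
        apply Finset.sum_eq_zero
        intro j hj
        have hjn : j < n + 1 := by simpa using hj
        have := alt_sum_pow j (n + 1) hjn
        calc ∑ k ∈ Finset.range (n + 2),
              ((n + 1).choose k : ℝ) * (n.choose j : ℝ) * ((-1 : ℝ) ^ k * (k : ℝ) ^ j)
            = (n.choose j : ℝ) * ∑ k ∈ Finset.range (n + 2),
                (-1 : ℝ) ^ k * ((n + 1).choose k : ℝ) * (k : ℝ) ^ j := by
              rw [Finset.mul_sum]
              exact Finset.sum_congr rfl fun k _ => by ring
          _ = 0 := by rw [this, mul_zero]
      rw [hz, mul_zero]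
    have hc0 : (P - (X + 1 : ℝ[X]) ^ (n + 1)).coeff 0 = 0 := by
      rw [hdiff] at heval
      simpa using heval
    rw [hc0, map_zero] at hdiff
    exact sub_eq_zero.mp hdiff

/-- The avalanche size distribution sums to one:
`∑_{k=0}^{N} C(N,k) p^k (1-(k+1)p)^(N-k) (k+1)^(k-1) = 1` for `p = 1/M`, `M ≥ N+1`. -/
theorem avalanche_distribution_sums_to_one (N M : ℕ) (hN : 0 < N) (hM : N + 1 ≤ M)
    (p : ℝ) (hp : p = 1 / (M : ℝ)) :
    ∑ k ∈ Finset.range (N + 1),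
        (N.choose k : ℝ) * p ^ k * (1 - ((k : ℝ) + 1) * p) ^ (N - k)
          * ((k : ℝ) + 1) ^ ((k : ℤ) - 1)
      = 1 := by
  have hM0 : (M : ℝ) ≠ 0 := by
    have : 0 < M := by omega
    exact_mod_cast this.ne'
  have hMpow : ((M : ℝ)) ^ N ≠ 0 := pow_ne_zero _ hM0
  have hpoly := congrArg (Polynomial.eval ((M : ℝ) - 1)) (abel_poly N)
  rw [eval_finset_sum, eval_pow, eval_add, eval_X, eval_one] at hpoly
  have hpoly' : ∑ k ∈ Finset.range (N + 1),
        (N.choose k : ℝ) * (((k + 1) ^ (k - 1) : ℕ) : ℝ) * ((M : ℝ) - 1 - (k : ℝ)) ^ (N - k)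
      = (M : ℝ) ^ N := by
    have h1 : ((M : ℝ) - 1 + 1) = (M : ℝ) := by ring
    have h2 : ∑ k ∈ Finset.range (N + 1),
          (N.choose k : ℝ) * (((k + 1) ^ (k - 1) : ℕ) : ℝ) * ((M : ℝ) - 1 - (k : ℝ)) ^ (N - k)
        = ∑ k ∈ Finset.range (N + 1),
            (C ((N.choose k : ℝ) * (((k + 1) ^ (k - 1) : ℕ) : ℝ))
              * (X - C (k : ℝ)) ^ (N - k)).eval ((M : ℝ) - 1) := by
      apply Finset.sum_congr rfl
      intro k _
      rw [eval_mul, eval_C, eval_pow, eval_sub, eval_X, eval_C, mul_assoc]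
    rw [h2, hpoly, h1]
  have hterm : ∀ k ∈ Finset.range (N + 1),
      (N.choose k : ℝ) * p ^ k * (1 - ((k : ℝ) + 1) * p) ^ (N - k)
          * ((k : ℝ) + 1) ^ ((k : ℤ) - 1)
        = (N.choose k : ℝ) * (((k + 1) ^ (k - 1) : ℕ) : ℝ)
            * ((M : ℝ) - 1 - (k : ℝ)) ^ (N - k) / (M : ℝ) ^ N := by
    intro k hk
    have hkN : k ≤ N := by simpa [Nat.lt_succ_iff] using hk
    have hz : ((k : ℝ) + 1) ^ ((k : ℤ) - 1) = (((k + 1) ^ (k - 1) : ℕ) : ℝ) := by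
      cases k with
      | zero => norm_num
      | succ k' =>
        have : ((k' + 1 : ℕ) : ℤ) - 1 = (k' : ℤ) := by push_cast; ring
        rw [this]
        rw [zpow_natCast]
        push_cast
        norm_num
    have hprob : (1 - ((k : ℝ) + 1) * p) = ((M : ℝ) - 1 - (k : ℝ)) / (M : ℝ) := by
      rw [hp]
      field_simp
      ring
    obtain ⟨j, hjN⟩ : ∃ j, N = k + j := ⟨N - k, by omega⟩
    have hNk : N - k = j := by omega
    rw [hz, hprob, hp, hNk, hjN, div_pow, div_pow, one_pow, pow_add]
    field_simp
  rw [Finset.sum_congr rfl hterm, ← Finset.sum_div, hpoly', div_self hMpow]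
end

section
/- Asymptotics of the critical avalanche distribution: with p = 1/(N+1), the ratio of binomial(N,k) * p^k * (1-(k+1)p)^(N-k) * (k+1)^(k-1) to k^(-3/2) tends to 1/sqrt(2π) as k → ∞ along any sequence with N ≥ k^2. -/
open Filter Real Topology

lemma real_eq (k' m : ℕ) (K M A B C e : ℝ) (hK0 : 0 < K) (hM0 : 0 < M) (he : 0 < e)
    (hB : 0 < B) (hC : 0 < C) :
    A / (B * C) * (1 / (K + M + 1)) ^ (k' + 1) * (M / (K + M + 1)) ^ m * (K + 1) ^ k'
        / K ^ (-(3 / 2 : ℝ))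
    = A / (Real.sqrt (2 * (K + M)) * ((K + M) / e) ^ (k' + 1 + m))
          / (B / (Real.sqrt (2 * K) * (K / e) ^ (k' + 1)) * (C / (Real.sqrt (2 * M) * (M / e) ^ m)))
        * Real.sqrt ((K + M) / M) * ((K + M) / (K + M + 1)) ^ (k' + 1 + m)
        * ((K + 1) / K) ^ (k' + 1) * (K / (K + 1)) * (1 / Real.sqrt 2) := by
  have hKM : (0:ℝ) < K + M := by linarith
  have hKM1 : (0:ℝ) < K + M + 1 := by linarith
  have h32 : K ^ (-(3/2 : ℝ)) = (K * Real.sqrt K)⁻¹ := by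
    rw [Real.rpow_neg hK0.le, show (3/2 : ℝ) = 1 + 1/2 by norm_num, Real.rpow_add hK0,
      Real.rpow_one, Real.sqrt_eq_rpow]
  rw [h32, Real.sqrt_mul (by norm_num : (0:ℝ) ≤ 2) K, Real.sqrt_mul (by norm_num : (0:ℝ) ≤ 2) M,
    Real.sqrt_mul (by norm_num : (0:ℝ) ≤ 2) (K + M), Real.sqrt_div hKM.le]
  have s2 : Real.sqrt 2 ≠ 0 := by positivity
  have sK : Real.sqrt K ≠ 0 := by positivity
  have sM : Real.sqrt M ≠ 0 := by positivity
  have sKM : Real.sqrt (K + M) ≠ 0 := by positivity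
  have hek : e ^ (k' + 1) ≠ 0 := by positivity
  have hem : e ^ m ≠ 0 := by positivity
  have hKk : K ^ (k' + 1) ≠ 0 := by positivity
  have hMm : M ^ m ≠ 0 := by positivity
  have hKMn : (K + M) ^ (k' + 1 + m) ≠ 0 := by positivity
  have h1 : (K + M + 1) ^ (k' + 1) ≠ 0 := by positivity
  have h2 : (K + M + 1) ^ m ≠ 0 := by positivity
  have h3 : (K + M + 1) ^ (k' + 1 + m) ≠ 0 := by positivity
  field_simp
  simp only [div_pow, one_pow]
  field_simp
  ring

lemma avalanche_eq (k m : ℕ) (hk : 1 ≤ k) (hm : 1 ≤ m) :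
    ((((k + m).choose k : ℝ)) * (1 / (((k + m : ℕ) : ℝ) + 1)) ^ k
        * (1 - ((k : ℝ) + 1) * (1 / (((k + m : ℕ) : ℝ) + 1))) ^ m
        * ((k : ℝ) + 1) ^ (k - 1)) / (k : ℝ) ^ (-(3 / 2 : ℝ))
    = (Stirling.stirlingSeq (k + m) / (Stirling.stirlingSeq k * Stirling.stirlingSeq m))
        * Real.sqrt (((k + m : ℕ) : ℝ) / (m : ℝ))
        * ((((k + m : ℕ) : ℝ) / (((k + m : ℕ) : ℝ) + 1)) ^ (k + m))
        * ((1 + 1 / (k : ℝ)) ^ k)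
        * ((k : ℝ) / ((k : ℝ) + 1))
        * (1 / Real.sqrt 2) := by
  obtain ⟨k', rfl⟩ : ∃ k', k = k' + 1 := ⟨k - 1, by omega⟩
  have hK0 : (0:ℝ) < (k' : ℝ) + 1 := by positivity
  have hM0 : (0:ℝ) < (m : ℝ) := by exact_mod_cast hm
  have h1 : (1 : ℝ) - (((k' : ℝ) + 1) + 1) * (1 / ((k' : ℝ) + 1 + (m : ℝ) + 1))
      = (m : ℝ) / ((k' : ℝ) + 1 + (m : ℝ) + 1) := by
    have : (k' : ℝ) + 1 + (m : ℝ) + 1 ≠ 0 := by positivity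
    field_simp
    ring
  have h2 : (1 : ℝ) + 1 / ((k' : ℝ) + 1) = (((k' : ℝ) + 1) + 1) / ((k' : ℝ) + 1) := by
    field_simp
  simp only [Stirling.stirlingSeq]
  rw [Nat.cast_choose ℝ (Nat.le_add_right _ m), Nat.add_sub_cancel_left]
  push_cast
  rw [h1, h2]
  exact real_eq k' m ((k' : ℝ) + 1) (m : ℝ) _ _ _ (Real.exp 1) hK0 hM0 (Real.exp_pos 1)
    (by exact_mod_cast Nat.factorial_pos _) (by exact_mod_cast Nat.factorial_pos _)

/-- Asymptotics of the critical avalanche distribution: with `p = 1/(N+1)` and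
`N ≥ k²` (and `N > k`), the ratio of `C(N,k) p^k (1-(k+1)p)^(N-k) (k+1)^(k-1)`
to `k^(-3/2)` tends to `1/√(2π)` as `k → ∞`. -/
theorem avalanche_asymptotic (N : ℕ → ℕ) (hNk : ∀ k, k < N k) (hN : ∀ k, k ^ 2 ≤ N k) :
    Tendsto (fun k : ℕ =>
        (((N k).choose k : ℝ) * (1 / ((N k : ℝ) + 1)) ^ k
            * (1 - ((k : ℝ) + 1) * (1 / ((N k : ℝ) + 1))) ^ (N k - k)
            * ((k : ℝ) + 1) ^ (k - 1))
          / (k : ℝ) ^ (-(3 / 2 : ℝ)))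
      atTop (nhds (1 / Real.sqrt (2 * Real.pi))) := by
  have hNtop : Tendsto N atTop atTop :=
    tendsto_atTop_mono (fun k => (hNk k).le) tendsto_id
  have hMtop : Tendsto (fun k => N k - k) atTop atTop := by
    refine tendsto_atTop_mono (f := fun k => k - 1) (fun k => ?_) (tendsto_sub_atTop_nat 1)
    show k - 1 ≤ N k - k
    have h1 := hN k
    have h2 : 2 * k ≤ k ^ 2 + 1 := by nlinarith
    omega
  have t1 : Tendsto (fun k => Stirling.stirlingSeq (N k)) atTop (𝓝 (Real.sqrt π)) :=
    Stirling.tendsto_stirlingSeq_sqrt_pi.comp hNtop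
  have t2 := Stirling.tendsto_stirlingSeq_sqrt_pi
  have t3 : Tendsto (fun k => Stirling.stirlingSeq (N k - k)) atTop (𝓝 (Real.sqrt π)) :=
    Stirling.tendsto_stirlingSeq_sqrt_pi.comp hMtop
  -- ratio N/(N-k) → 1
  have hr : Tendsto (fun k => ((N k : ℝ)) / (((N k - k : ℕ)) : ℝ)) atTop (𝓝 1) := by
    have hup : Tendsto (fun k : ℕ => 1 + 2 / (k : ℝ)) atTop (𝓝 1) := by
      have := (tendsto_const_div_atTop_nhds_zero_nat (2:ℝ)).const_add 1
      simpa using this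
    refine tendsto_of_tendsto_of_tendsto_of_le_of_le' tendsto_const_nhds hup ?_ ?_
    · filter_upwards [eventually_ge_atTop 1] with k hk
      have h1 : (0:ℝ) < ((N k - k : ℕ) : ℝ) := by
        have := hNk k; have : 1 ≤ N k - k := by omega
        exact_mod_cast Nat.lt_of_lt_of_le Nat.zero_lt_one this
      rw [le_div_iff₀ h1, one_mul]
      exact_mod_cast Nat.sub_le (N k) k
    · filter_upwards [eventually_ge_atTop 2] with k hk
      have hk2 : (2:ℝ) ≤ (k : ℝ) := by exact_mod_cast hk
      have hN' : ((k:ℝ)) ^ 2 ≤ (N k : ℝ) := by exact_mod_cast hN k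
      have hcast : ((N k - k : ℕ) : ℝ) = (N k : ℝ) - k := by
        have := (hNk k).le; push_cast [Nat.cast_sub this]; ring
      have hpos : (0:ℝ) < (N k : ℝ) - (k : ℝ) := by nlinarith
      have hk0 : (0:ℝ) < (k : ℝ) := by linarith
      rw [hcast, show (1 : ℝ) + 2 / (k:ℝ) = ((k:ℝ) + 2) / k by field_simp,
        div_le_div_iff₀ hpos hk0]
      nlinarith
  have hsq : Tendsto (fun k => Real.sqrt ((N k : ℝ) / (((N k - k : ℕ)) : ℝ))) atTop (𝓝 1) := by
    have h := (Real.continuous_sqrt.tendsto 1).comp hr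
    rw [Real.sqrt_one] at h
    exact h
  -- (n/(n+1))^n → (exp 1)⁻¹
  have t5 : Tendsto (fun k => ((N k : ℝ) / ((N k : ℝ) + 1)) ^ (N k)) atTop
      (𝓝 (Real.exp 1)⁻¹) := by
    have base : Tendsto (fun n : ℕ => ((n : ℝ) / ((n : ℝ) + 1)) ^ n) atTop
        (𝓝 (Real.exp 1)⁻¹) := by
      refine Tendsto.congr' ?_ ((Real.tendsto_one_add_div_pow_exp 1).inv₀ (Real.exp_ne_zero 1))
      filter_upwards [eventually_ge_atTop 1] with n hn
      have hn0 : (0:ℝ) < (n : ℝ) := by exact_mod_cast hn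
      rw [← inv_pow]
      congr 1
      rw [eq_div_iff (by positivity)]
      field_simp
    exact base.comp hNtop
  have t6 : Tendsto (fun k : ℕ => (1 + 1 / (k : ℝ)) ^ k) atTop (𝓝 (Real.exp 1)) :=
    Real.tendsto_one_add_div_pow_exp 1
  have t7 : Tendsto (fun k : ℕ => (k : ℝ) / ((k : ℝ) + 1)) atTop (𝓝 1) := by
    have := tendsto_natCast_div_add_atTop (1 : ℝ)
    simpa using this
  have hπ : Real.sqrt π ≠ 0 := by positivity
  have tall : Tendsto (fun k =>
      (Stirling.stirlingSeq (N k) / (Stirling.stirlingSeq k * Stirling.stirlingSeq (N k - k)))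
        * Real.sqrt ((N k : ℝ) / (((N k - k : ℕ)) : ℝ))
        * (((N k : ℝ) / ((N k : ℝ) + 1)) ^ (N k))
        * ((1 + 1 / (k : ℝ)) ^ k)
        * ((k : ℝ) / ((k : ℝ) + 1))
        * (1 / Real.sqrt 2)) atTop
      (𝓝 (Real.sqrt π / (Real.sqrt π * Real.sqrt π) * 1 * (Real.exp 1)⁻¹ * Real.exp 1 * 1
        * (1 / Real.sqrt 2))) :=
    (((((t1.div (t2.mul t3) (by positivity)).mul hsq).mul t5).mul t6).mul t7).mul
      tendsto_const_nhds
  have hconst : Real.sqrt π / (Real.sqrt π * Real.sqrt π) * 1 * (Real.exp 1)⁻¹ * Real.exp 1 * 1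
      * (1 / Real.sqrt 2) = 1 / Real.sqrt (2 * π) := by
    rw [Real.sqrt_mul (by norm_num : (0:ℝ) ≤ 2), ← div_div, div_self hπ]
    have h2 : Real.sqrt 2 ≠ 0 := by positivity
    field_simp
  rw [← hconst]
  refine Tendsto.congr' ?_ tall
  filter_upwards [eventually_ge_atTop 1] with k hk
  obtain ⟨m, hm1, hnm⟩ : ∃ m, 1 ≤ m ∧ N k = k + m :=
    ⟨N k - k, by have := hNk k; omega, by have := hNk k; omega⟩
  rw [hnm, Nat.add_sub_cancel_left]
  exact (avalanche_eq k m hk hm1).symm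
end

section
/- With (k)^(k-1) in place of (k+1)^(k-1): with p = 1/(N+1), the ratio of binomial(N,k) * p^k * (1-(k+1)p)^(N-k) * k^(k-1) to k^(-3/2) tends to 1/(sqrt(2π)·e) as k → ∞ along any sequence with N ≥ k^2. -/
open Filter Real Finset


lemma aux_log1 {x : ℝ} (h0 : 0 ≤ x) (h : x ≤ 1/2) :
    |x + Real.log (1 - x)| ≤ 2 * x ^ 2 := by
  have h1 : |x| < 1 := by rw [abs_of_nonneg h0]; linarith
  have H := Real.abs_log_sub_add_sum_range_le h1 1
  rw [abs_of_nonneg h0] at H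
  simp only [Finset.sum_range_one, pow_one, Nat.cast_zero, zero_add, div_one] at H
  calc |x + Real.log (1 - x)| ≤ x ^ 2 / (1 - x) := H
    _ ≤ x ^ 2 / (1/2) := by
        apply div_le_div_of_nonneg_left (by positivity) (by norm_num) (by linarith)
    _ = 2 * x ^ 2 := by ring

lemma aux_log2 {x : ℝ} (h0 : 0 ≤ x) (h : x ≤ 1/2) :
    |x + x ^ 2 / 2 + Real.log (1 - x)| ≤ 2 * x ^ 3 := by
  have h1 : |x| < 1 := by rw [abs_of_nonneg h0]; linarith
  have H := Real.abs_log_sub_add_sum_range_le h1 2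
  rw [abs_of_nonneg h0] at H
  have e : ∑ i ∈ Finset.range 2, x ^ (i+1) / (i+1) = x + x ^ 2 / 2 := by
    rw [Finset.sum_range_succ, Finset.sum_range_one]; norm_num
  rw [e] at H
  calc |x + x ^ 2 / 2 + Real.log (1 - x)| ≤ x ^ 3 / (1 - x) := H
    _ ≤ x ^ 3 / (1/2) := by
        apply div_le_div_of_nonneg_left (by positivity) (by norm_num) (by linarith)
    _ = 2 * x ^ 3 := by ring

lemma aux_gauss (k : ℕ) : ∑ j ∈ Finset.range k, ((j : ℝ) + 1) = k * (k + 1) / 2 := by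
  induction k with
  | zero => simp
  | succ n ih => rw [Finset.sum_range_succ, ih]; push_cast; ring

noncomputable def gfun (N : ℕ → ℕ) (k : ℕ) : ℝ :=
  (∑ j ∈ Finset.range k, Real.log (1 - ((j : ℝ) + 1) / ((N k : ℝ) + 1)))
    + ((N k - k : ℕ) : ℝ) * Real.log (1 - ((k : ℝ) + 1) / ((N k : ℝ) + 1)) + k

set_option maxHeartbeats 1000000 in
lemma gfun_bound (N : ℕ → ℕ) (hNk : ∀ k, k < N k) (hN : ∀ k, k ^ 2 ≤ N k)
    {k : ℕ} (hk : 3 ≤ k) : |gfun N k + 1| ≤ 23 / k := by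
  set M : ℝ := (N k : ℝ) with hM
  set c : ℝ := M + 1 with hc
  have hkR : (3 : ℝ) ≤ k := by exact_mod_cast hk
  have hk0 : (0 : ℝ) < k := by linarith
  have hM2 : (k : ℝ) ^ 2 ≤ M := by rw [hM]; exact_mod_cast hN k
  have hkM : (k : ℝ) < M := by rw [hM]; exact_mod_cast hNk k
  have hc0 : (0 : ℝ) < c := by rw [hc]; nlinarith
  have hck : (k : ℝ) ^ 2 ≤ c := by rw [hc]; nlinarith
  have hcast : ((N k - k : ℕ) : ℝ) = M - k := by
    rw [Nat.cast_sub (hNk k).le, hM]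
  have expand : gfun N k = (∑ j ∈ Finset.range k, Real.log (1 - ((j : ℝ) + 1) / c))
      + (M - k) * Real.log (1 - ((k : ℝ) + 1) / c) + k := by
    rw [gfun, hcast]
  have hyh : ((k : ℝ) + 1) / c ≤ 1 / 2 := by
    rw [div_le_div_iff₀ hc0 (by norm_num)]
    nlinarith
  have hy2 : ((k : ℝ) + 1) / c ≤ 2 / k := by
    rw [div_le_div_iff₀ hc0 hk0]
    nlinarith
  -- the purely algebraic identity
  have halg : (k : ℝ) + 1 = (k : ℝ) * (k + 1) / (2 * c)
      + (M - k) * (((k : ℝ) + 1) / c + (((k : ℝ) + 1) / c) ^ 2 / 2)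
      + (((k : ℝ) + 1) / (2 * c) + ((k : ℝ) + 1) ^ 3 / (2 * c ^ 2)) := by
    have hMc : M = c - 1 := by rw [hc]; ring
    rw [hMc]
    field_simp
    ring
  have hsplit : ∑ j ∈ Finset.range k, (((j : ℝ) + 1) / c + Real.log (1 - ((j : ℝ) + 1) / c))
      = (k : ℝ) * (k + 1) / (2 * c)
        + ∑ j ∈ Finset.range k, Real.log (1 - ((j : ℝ) + 1) / c) := by
    rw [Finset.sum_add_distrib, ← Finset.sum_div, aux_gauss, div_div]
  have decomp : gfun N k + 1
      = (∑ j ∈ Finset.range k, (((j : ℝ) + 1) / c + Real.log (1 - ((j : ℝ) + 1) / c)))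
        + (M - k) * (((k : ℝ) + 1) / c + (((k : ℝ) + 1) / c) ^ 2 / 2
            + Real.log (1 - ((k : ℝ) + 1) / c))
        + (((k : ℝ) + 1) / (2 * c) + ((k : ℝ) + 1) ^ 3 / (2 * c ^ 2)) := by
    rw [expand, hsplit]
    have hd : (M - k) * (((k : ℝ) + 1) / c + (((k : ℝ) + 1) / c) ^ 2 / 2
            + Real.log (1 - ((k : ℝ) + 1) / c))
        = (M - k) * (((k : ℝ) + 1) / c + (((k : ℝ) + 1) / c) ^ 2 / 2)
          + (M - k) * Real.log (1 - ((k : ℝ) + 1) / c) := by ring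
    rw [hd]
    linarith [halg]
  -- bound each of the three pieces
  have hT1 : |∑ j ∈ Finset.range k, (((j : ℝ) + 1) / c + Real.log (1 - ((j : ℝ) + 1) / c))|
      ≤ 2 / k := by
    have step : ∀ j ∈ Finset.range k,
        |((j : ℝ) + 1) / c + Real.log (1 - ((j : ℝ) + 1) / c)| ≤ 2 * ((k : ℝ) / c) ^ 2 := by
      intro j hj
      have hj' : (j : ℝ) + 1 ≤ k := by
        have := Finset.mem_range.mp hj
        exact_mod_cast Nat.succ_le_of_lt this
      have hx0 : (0 : ℝ) ≤ ((j : ℝ) + 1) / c := by positivity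
      have hxk : ((j : ℝ) + 1) / c ≤ (k : ℝ) / c := by gcongr
      have hkc : (k : ℝ) / c ≤ 1 / 2 := by
        rw [div_le_div_iff₀ hc0 (by norm_num)]
        nlinarith
      refine (aux_log1 hx0 (hxk.trans hkc)).trans ?_
      gcongr
    calc |∑ j ∈ Finset.range k, (((j : ℝ) + 1) / c + Real.log (1 - ((j : ℝ) + 1) / c))|
        ≤ ∑ j ∈ Finset.range k, |((j : ℝ) + 1) / c + Real.log (1 - ((j : ℝ) + 1) / c)| :=
          Finset.abs_sum_le_sum_abs _ _
      _ ≤ ∑ _j ∈ Finset.range k, 2 * ((k : ℝ) / c) ^ 2 := Finset.sum_le_sum step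
      _ = (k : ℝ) * (2 * ((k : ℝ) / c) ^ 2) := by
          rw [Finset.sum_const, Finset.card_range, nsmul_eq_mul]
      _ = 2 * (k : ℝ) ^ 3 / c ^ 2 := by rw [div_pow]; ring
      _ ≤ 2 / k := by
          have h4 : (k : ℝ) ^ 4 ≤ c ^ 2 := by
            calc (k : ℝ) ^ 4 = ((k : ℝ) ^ 2) ^ 2 := by ring
              _ ≤ c ^ 2 := by gcongr
          rw [div_le_div_iff₀ (by positivity) hk0]
          nlinarith
  have hT2 : |(M - k) * (((k : ℝ) + 1) / c + (((k : ℝ) + 1) / c) ^ 2 / 2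
      + Real.log (1 - ((k : ℝ) + 1) / c))| ≤ (16 : ℝ) / k := by
    rw [abs_mul, abs_of_nonneg (by linarith : (0:ℝ) ≤ M - k)]
    have hlog := aux_log2 (by positivity : (0:ℝ) ≤ ((k : ℝ) + 1) / c) hyh
    calc (M - k) * |((k : ℝ) + 1) / c + (((k : ℝ) + 1) / c) ^ 2 / 2
          + Real.log (1 - ((k : ℝ) + 1) / c)|
        ≤ c * (2 * (((k : ℝ) + 1) / c) ^ 3) := by
          apply mul_le_mul (by linarith) hlog (abs_nonneg _) hc0.le
      _ = 2 * ((k : ℝ) + 1) ^ 3 / c ^ 2 := by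
          field_simp
      _ ≤ (16 : ℝ) / k := by
          have h4 : (k : ℝ) ^ 4 ≤ c ^ 2 := by
            calc (k : ℝ) ^ 4 = ((k : ℝ) ^ 2) ^ 2 := by ring
              _ ≤ c ^ 2 := by gcongr
          have h8 : ((k : ℝ) + 1) ^ 3 ≤ 8 * (k : ℝ) ^ 3 := by
            calc ((k : ℝ) + 1) ^ 3 ≤ (2 * (k : ℝ)) ^ 3 := by
                  apply pow_le_pow_left₀ (by linarith) (by linarith)
              _ = 8 * (k : ℝ) ^ 3 := by ring
          rw [div_le_div_iff₀ (by positivity) hk0]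
          nlinarith [mul_le_mul_of_nonneg_right h8 hk0.le]
  have hD : |((k : ℝ) + 1) / (2 * c) + ((k : ℝ) + 1) ^ 3 / (2 * c ^ 2)| ≤ (5 : ℝ) / k := by
    rw [abs_of_nonneg (by positivity)]
    have h1 : ((k : ℝ) + 1) / (2 * c) ≤ (1 : ℝ) / k := by
      rw [div_le_div_iff₀ (by positivity) hk0]
      nlinarith [mul_nonneg hk0.le (by linarith : (0:ℝ) ≤ (k : ℝ) - 1), hck]
    have h2 : ((k : ℝ) + 1) ^ 3 / (2 * c ^ 2) ≤ (4 : ℝ) / k := by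
      have h4 : (k : ℝ) ^ 4 ≤ c ^ 2 := by
        calc (k : ℝ) ^ 4 = ((k : ℝ) ^ 2) ^ 2 := by ring
          _ ≤ c ^ 2 := by gcongr
      have h8 : ((k : ℝ) + 1) ^ 3 ≤ 8 * (k : ℝ) ^ 3 := by
        calc ((k : ℝ) + 1) ^ 3 ≤ (2 * (k : ℝ)) ^ 3 := by
              apply pow_le_pow_left₀ (by linarith) (by linarith)
          _ = 8 * (k : ℝ) ^ 3 := by ring
      rw [div_le_div_iff₀ (by positivity) hk0]
      nlinarith [mul_le_mul_of_nonneg_right h8 hk0.le]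
    refine le_trans (add_le_add h1 h2) (le_of_eq (by ring))
  rw [decomp]
  refine le_trans (abs_add_le _ _) ?_
  refine le_trans (add_le_add_left (abs_add_le _ _) _) ?_
  refine le_trans (add_le_add (add_le_add hT1 hT2) hD) (le_of_eq (by ring))

set_option maxHeartbeats 1000000 in
lemma gfun_exp (N : ℕ → ℕ) (hNk : ∀ k, k < N k) {k : ℕ} (hk : 1 ≤ k) :
    (((N k).choose k : ℝ) * (1 / ((N k : ℝ) + 1)) ^ k
        * (1 - ((k : ℝ) + 1) * (1 / ((N k : ℝ) + 1))) ^ (N k - k)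
        * (k : ℝ) ^ (k - 1)) / (k : ℝ) ^ (-(3 / 2 : ℝ))
    = Real.exp (gfun N k) * (Real.sqrt 2 * Stirling.stirlingSeq k)⁻¹ := by
  set M : ℝ := (N k : ℝ) with hM
  set c : ℝ := M + 1 with hc
  have hk0 : (0 : ℝ) < k := by exact_mod_cast hk
  have hkM : (k : ℝ) < M := by rw [hM]; exact_mod_cast hNk k
  have hc0 : (0 : ℝ) < c := by rw [hc]; linarith
  have hq0 : (0 : ℝ) < 1 - ((k : ℝ) + 1) / c := by
    rw [sub_pos, div_lt_one hc0, hc]; linarith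
  -- exp of gfun as a product
  have hexp : Real.exp (gfun N k)
      = ((((N k).choose k : ℝ) * (Nat.factorial k : ℝ)) / c ^ k)
          * (1 - ((k : ℝ) + 1) / c) ^ (N k - k) * Real.exp 1 ^ k := by
    rw [gfun, Real.exp_add, Real.exp_add, Real.exp_sum]
    have h1 : ∀ j ∈ Finset.range k, Real.exp (Real.log (1 - ((j : ℝ) + 1) / c))
        = (M - j) / c := by
      intro j hj
      have hj' : (j : ℝ) + 1 ≤ k := by
        exact_mod_cast Nat.succ_le_of_lt (Finset.mem_range.mp hj)
      have hpos : (0 : ℝ) < 1 - ((j : ℝ) + 1) / c := by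
        rw [sub_pos, div_lt_one hc0, hc]; linarith
      rw [Real.exp_log hpos]
      field_simp
      rw [hc]; ring
    rw [Finset.prod_congr rfl h1, Finset.prod_div_distrib, Finset.prod_const,
      Finset.card_range]
    have h2 : ∏ j ∈ Finset.range k, (M - (j : ℝ)) = (((N k).choose k : ℝ) * (Nat.factorial k : ℝ)) := by
      have h3 : ∀ j ∈ Finset.range k, (M - (j : ℝ)) = ((N k - j : ℕ) : ℝ) := by
        intro j hj
        rw [Nat.cast_sub (le_of_lt ((Finset.mem_range.mp hj).trans (hNk k))), hM]
      rw [Finset.prod_congr rfl h3, ← Nat.cast_prod, ← Nat.descFactorial_eq_prod_range,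
        Nat.descFactorial_eq_factorial_mul_choose]
      push_cast; ring
    rw [h2, Real.exp_nat_mul, Real.exp_log hq0]
    have he : Real.exp (k : ℝ) = Real.exp 1 ^ k := by
      rw [← Real.exp_nat_mul]; norm_num
    rw [he]
  -- the Stirling factor
  have hst : (Real.sqrt 2 * Stirling.stirlingSeq k)⁻¹
      = Real.sqrt k * ((k : ℝ) / Real.exp 1) ^ k / (Nat.factorial k : ℝ) := by
    rw [Stirling.stirlingSeq]
    rw [show ((2 : ℝ) * k) = 2 * (k : ℝ) by norm_num, Real.sqrt_mul (by norm_num : (0:ℝ) ≤ 2)]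
    have hs2 : (0 : ℝ) < Real.sqrt 2 := by positivity
    have hsk : (0 : ℝ) < Real.sqrt k := Real.sqrt_pos.mpr hk0
    have hke : (0 : ℝ) < ((k : ℝ) / Real.exp 1) ^ k := by positivity
    have hf : (0 : ℝ) < (Nat.factorial k : ℝ) := by exact_mod_cast Nat.factorial_pos k
    field_simp
  -- the rpow factor
  have h32 : (k : ℝ) ^ (-(3 / 2 : ℝ)) = ((k : ℝ) * Real.sqrt k)⁻¹ := by
    rw [Real.rpow_neg hk0.le]
    congr 1
    rw [show (3 / 2 : ℝ) = 1 + 1 / 2 by norm_num, Real.rpow_add hk0, Real.rpow_one,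
      ← Real.sqrt_eq_rpow]
  have hkk : (k : ℝ) ^ (k - 1) * (k : ℝ) = (k : ℝ) ^ k := by
    rw [← pow_succ, Nat.sub_add_cancel hk]
  -- put it together
  rw [hexp, hst, h32, mul_one_div ((k : ℝ) + 1) c]
  have hek : (0 : ℝ) < Real.exp 1 ^ k := by positivity
  have hf : (0 : ℝ) < (Nat.factorial k : ℝ) := by exact_mod_cast Nat.factorial_pos k
  have hck : (0 : ℝ) < c ^ k := by positivity
  calc ((N k).choose k : ℝ) * (1 / c) ^ k * (1 - ((k : ℝ) + 1) / c) ^ (N k - k)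
        * (k : ℝ) ^ (k - 1) / ((k : ℝ) * Real.sqrt k)⁻¹
      = ((N k).choose k : ℝ) * (1 / c) ^ k * (1 - ((k : ℝ) + 1) / c) ^ (N k - k)
        * ((k : ℝ) ^ (k - 1) * (k : ℝ)) * Real.sqrt k := by
        rw [div_eq_mul_inv, inv_inv]; ring
    _ = ((N k).choose k : ℝ) * (1 / c) ^ k * (1 - ((k : ℝ) + 1) / c) ^ (N k - k)
        * (k : ℝ) ^ k * Real.sqrt k := by rw [hkk]
    _ = ((N k).choose k : ℝ) * (Nat.factorial k : ℝ) / c ^ k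
          * (1 - ((k : ℝ) + 1) / c) ^ (N k - k) * Real.exp 1 ^ k
          * (Real.sqrt k * ((k : ℝ) / Real.exp 1) ^ k / (Nat.factorial k : ℝ)) := by
        rw [div_pow ((k : ℝ)) (Real.exp 1) k, one_div, inv_pow]
        field_simp

/-- Asymptotics of the critical avalanche distribution: with `p = 1/(N+1)` and
`N ≥ k²` (and `N > k`), the ratio of `C(N,k) p^k (1-(k+1)p)^(N-k) k^(k-1)`
to `k^(-3/2)` tends to `1/(√(2π)·e)` as `k → ∞`. -/
theorem avalanche_asymptotic_shifted (N : ℕ → ℕ) (hNk : ∀ k, k < N k) (hN : ∀ k, k ^ 2 ≤ N k) :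
    Tendsto (fun k : ℕ =>
        (((N k).choose k : ℝ) * (1 / ((N k : ℝ) + 1)) ^ k
            * (1 - ((k : ℝ) + 1) * (1 / ((N k : ℝ) + 1))) ^ (N k - k)
            * (k : ℝ) ^ (k - 1))
          / (k : ℝ) ^ (-(3 / 2 : ℝ)))
      atTop (nhds (1 / (Real.sqrt (2 * Real.pi) * Real.exp 1))) := by
  have h0 : Tendsto (fun k : ℕ => (23 : ℝ) / k) atTop (nhds 0) :=
    tendsto_const_div_atTop_nhds_zero_nat 23
  have hgz : Tendsto (fun k => gfun N k + 1) atTop (nhds 0) := by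
    refine squeeze_zero_norm' ?_ h0
    refine eventually_atTop.mpr ⟨3, fun k hk => ?_⟩
    simpa [Real.norm_eq_abs] using gfun_bound N hNk hN hk
  have hg : Tendsto (fun k => gfun N k) atTop (nhds (-1 : ℝ)) := by
    have := hgz.add_const (-1 : ℝ)
    simpa using this
  have hexp : Tendsto (fun k => Real.exp (gfun N k)) atTop (nhds (Real.exp (-1))) :=
    (Real.continuous_exp.tendsto _).comp hg
  have hsP : Tendsto (fun k : ℕ => Real.sqrt 2 * Stirling.stirlingSeq k) atTop
      (nhds (Real.sqrt 2 * Real.sqrt Real.pi)) :=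
    tendsto_const_nhds.mul Stirling.tendsto_stirlingSeq_sqrt_pi
  have hne : Real.sqrt 2 * Real.sqrt Real.pi ≠ 0 := by positivity
  have hmul := hexp.mul (hsP.inv₀ hne)
  have hval : Real.exp (-1) * (Real.sqrt 2 * Real.sqrt Real.pi)⁻¹
      = 1 / (Real.sqrt (2 * Real.pi) * Real.exp 1) := by
    rw [Real.sqrt_mul (by norm_num : (0:ℝ) ≤ 2), Real.exp_neg]
    ring
  rw [← hval]
  refine hmul.congr' ?_
  refine eventually_atTop.mpr ⟨1, fun k hk => ?_⟩
  exact (gfun_exp N hNk hk).symm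
end

section
/- Falling factorial upper bound: for positive integers k, o, o' with k - o - o' ≥ 0, the ratio (k-o)! / ((k-o-o')! * (k-o+1)^(o')) is at most exp(-o'(o'+1)/(2(k-o+1))). -/
/-- Falling factorial upper bound: for positive integers `k, o, o'` with `k ≥ o + o'`,
`(k-o)! / ((k-o-o')! (k-o+1)^(o')) ≤ exp(-o'(o'+1)/(2(k-o+1)))`. -/
theorem falling_factorial_upper_bound (k o o' : ℕ)
    (hk : 0 < k) (ho : 0 < o) (ho' : 0 < o') (h : o + o' ≤ k) :
    ((k - o).factorial : ℝ)
        / (((k - o - o').factorial : ℝ) * ((k : ℝ) - (o : ℝ) + 1) ^ o')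
      ≤ Real.exp (-((o' : ℝ) * ((o' : ℝ) + 1)) / (2 * ((k : ℝ) - (o : ℝ) + 1))) := by
  set n := k - o with hn
  have hok : o ≤ k := le_trans (Nat.le_add_right _ _) h
  have hno : o' ≤ n := by omega
  have hcast : (k : ℝ) - (o : ℝ) + 1 = (n : ℝ) + 1 := by
    rw [hn]; push_cast [Nat.cast_sub hok]; ring
  have hpos : (0:ℝ) < (n : ℝ) + 1 := by positivity
  rw [hcast]
  have hfact : ((n : ℕ).factorial : ℝ) / ((n - o').factorial : ℝ)
      = ∏ i ∈ Finset.range o', (((n : ℝ) - i) ) := by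
    rw [div_eq_iff (by positivity)]
    rw [show ∏ i ∈ Finset.range o', ((n : ℝ) - i) = ((n.descFactorial o' : ℕ) : ℝ) by
      rw [Nat.descFactorial_eq_prod_range, Nat.cast_prod]
      refine Finset.prod_congr rfl fun i hi => ?_
      have hin : i ≤ n := by simp only [Finset.mem_range] at hi; omega
      push_cast [Nat.cast_sub hin, Nat.cast_sub hok, hn, Nat.cast_sub (show i ≤ k - o by omega)]
      ring]
    rw [← Nat.cast_mul, mul_comm, Nat.factorial_mul_descFactorial hno]
  have hLHS : ((n).factorial : ℝ) / (((n - o').factorial : ℝ) * ((n : ℝ) + 1) ^ o')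
      = ∏ i ∈ Finset.range o', (((n : ℝ) - i) / ((n : ℝ) + 1)) := by
    rw [Finset.prod_div_distrib, Finset.prod_const, Finset.card_range, ← hfact]
    field_simp
  rw [hLHS]
  have hstep : ∀ i ∈ Finset.range o', ((n : ℝ) - i) / ((n : ℝ) + 1)
      ≤ Real.exp (-(((i : ℝ) + 1) / ((n : ℝ) + 1))) := by
    intro i hi
    have heq : ((n : ℝ) - i) / ((n : ℝ) + 1) = (-(((i : ℝ) + 1) / ((n : ℝ) + 1))) + 1 := by
      field_simp
      ring
    rw [heq]
    exact Real.add_one_le_exp _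
  have hsum : ∀ m : ℕ, ∑ i ∈ Finset.range m, ((i : ℝ) + 1) = (m : ℝ) * ((m : ℝ) + 1) / 2 := by
    intro m
    induction m with
    | zero => simp
    | succ p ih => rw [Finset.sum_range_succ, ih]; push_cast; ring
  calc ∏ i ∈ Finset.range o', (((n : ℝ) - i) / ((n : ℝ) + 1))
      ≤ ∏ i ∈ Finset.range o', Real.exp (-(((i : ℝ) + 1) / ((n : ℝ) + 1))) := by
        refine Finset.prod_le_prod (fun i hi => ?_) hstep
        simp only [Finset.mem_range] at hi
        have h1 : (0:ℝ) ≤ (n : ℝ) - i := by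
          have : (i : ℝ) ≤ (n : ℝ) := by exact_mod_cast by omega
          linarith
        exact div_nonneg h1 hpos.le
    _ = Real.exp (∑ i ∈ Finset.range o', -(((i : ℝ) + 1) / ((n : ℝ) + 1))) := by
        rw [Real.exp_sum]
    _ = Real.exp (-((o' : ℝ) * ((o' : ℝ) + 1)) / (2 * ((n : ℝ) + 1))) := by
        congr 1
        rw [show (∑ i ∈ Finset.range o', -(((i : ℝ) + 1) / ((n : ℝ) + 1)))
            = -((∑ i ∈ Finset.range o', ((i : ℝ) + 1)) / ((n : ℝ) + 1)) by
          rw [Finset.sum_neg_distrib, Finset.sum_div]]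
        rw [hsum]
        field_simp
end

section
/- The ratio (N-o)^(o') / (N-o)_(o') is at most ((N-o)/(N-o-o'))^(o'), and consequently the binomial ratio binomial(N-o'-o, k-o'-o) * (N-o)^(o') * (k-o-o')! / (binomial(N-o, k-o) * (k-o)!) tends to 1 as o → ∞ with o' = ⌈φ·o⌉ for fixed φ ∈ (0,1) and o²/N → 0. -/
open Filter

lemma nat_id (a b c : ℕ) :
    (a + b).choose b * b.factorial * (a + b + c).descFactorial c
      = (a + b + c).choose (b + c) * (b + c).factorial := by
  apply Nat.eq_of_mul_eq_mul_right (Nat.factorial_pos a)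
  have h1 : (a + b).choose b * b.factorial * (a + b - b).factorial = (a + b).factorial :=
    Nat.choose_mul_factorial_mul_factorial (Nat.le_add_left b a)
  have h2 : (a + b + c).choose (b + c) * (b + c).factorial * (a + b + c - (b + c)).factorial
      = (a + b + c).factorial :=
    Nat.choose_mul_factorial_mul_factorial (by omega)
  have h3 : (a + b + c - c).factorial * (a + b + c).descFactorial c = (a + b + c).factorial :=
    Nat.factorial_mul_descFactorial (by omega)
  have e1 : a + b - b = a := by omega
  have e2 : a + b + c - (b + c) = a := by omega
  have e3 : a + b + c - c = a + b := by omega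
  rw [e1] at h1; rw [e2] at h2; rw [e3] at h3
  calc (a + b).choose b * b.factorial * (a + b + c).descFactorial c * a.factorial
      = ((a + b).choose b * b.factorial * a.factorial) * (a + b + c).descFactorial c := by ring
    _ = (a + b).factorial * (a + b + c).descFactorial c := by rw [h1]
    _ = (a + b + c).factorial := h3
    _ = (a + b + c).choose (b + c) * (b + c).factorial * a.factorial := h2.symm

lemma prod_eq_desc (N o o' : ℕ) (h : o + o' ≤ N) :
    ∏ i ∈ Finset.range o', ((N : ℝ) - (o : ℝ) - (i : ℝ))
      = (((N - o).descFactorial o' : ℕ) : ℝ) := by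
  rw [Nat.descFactorial_eq_prod_range, Nat.cast_prod]
  apply Finset.prod_congr rfl
  intro i hi
  have hio : i < o' := Finset.mem_range.mp hi
  have h1 : i ≤ N - o := by omega
  have h2 : o ≤ N := by omega
  rw [Nat.cast_sub h1, Nat.cast_sub h2]

lemma E_eq (N k o o' : ℕ) (h1 : o + o' ≤ k) (h2 : k < N) :
    (((N - o' - o).choose (k - o' - o) : ℝ) * ((N : ℝ) - (o : ℝ)) ^ o'
        * ((k - o - o').factorial : ℝ))
      / (((N - o).choose (k - o) : ℝ) * ((k - o).factorial : ℝ))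
    = ((N : ℝ) - (o : ℝ)) ^ o' / (((N - o).descFactorial o' : ℕ) : ℝ) := by
  obtain ⟨a, ha⟩ : ∃ a, N - k = a := ⟨_, rfl⟩
  obtain ⟨b, hb⟩ : ∃ b, k - o - o' = b := ⟨_, rfl⟩
  have e1 : N - o' - o = a + b := by omega
  have e2 : k - o' - o = b := by omega
  have e3 : k - o - o' = b := by omega
  have e4 : N - o = a + b + o' := by omega
  have e5 : k - o = b + o' := by omega
  rw [e1, e2, e3, e4, e5]
  have hid := nat_id a b o'
  have hcast : ((a + b).choose b : ℝ) * (b.factorial : ℝ) * ((a + b + o').descFactorial o' : ℝ)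
      = ((a + b + o').choose (b + o') : ℝ) * ((b + o').factorial : ℝ) := by
    exact_mod_cast congrArg (Nat.cast (R := ℝ)) hid
  have hd1 : (0:ℝ) < ((a + b + o').choose (b + o') : ℝ) := by
    exact_mod_cast Nat.choose_pos (by omega)
  have hd2 : (0:ℝ) < ((b + o').factorial : ℝ) := by exact_mod_cast (b + o').factorial_pos
  have hd3 : (0:ℝ) < ((a + b + o').descFactorial o' : ℝ) := by
    have : (a + b + o').descFactorial o' ≠ 0 := by
      rw [Ne, Nat.descFactorial_eq_zero_iff_lt]; omega
    exact_mod_cast Nat.pos_of_ne_zero this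
  rw [div_eq_div_iff (by positivity) hd3.ne']
  linear_combination ((N:ℝ) - (o:ℝ)) ^ o' * hcast


lemma part1 (N k o o' : ℕ) (ho : 0 < o) (ho' : 0 < o') (hk : o + o' ≤ k) (hN : k < N) :
    ((N : ℝ) - (o : ℝ)) ^ o' / ∏ i ∈ Finset.range o', ((N : ℝ) - (o : ℝ) - (i : ℝ))
      ≤ (((N : ℝ) - (o : ℝ)) / ((N : ℝ) - (o : ℝ) - (o' : ℝ))) ^ o' := by
  have hoo' : (o : ℝ) + (o' : ℝ) < (N : ℝ) := by exact_mod_cast (by omega : o + o' < N)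
  have hpos : (0:ℝ) < (N : ℝ) - (o : ℝ) - (o' : ℝ) := by linarith
  have hNo : (0:ℝ) ≤ (N : ℝ) - (o : ℝ) := by
    have : (o':ℝ) ≥ 0 := by positivity
    linarith
  rw [div_pow]
  apply div_le_div_of_nonneg_left (by positivity) (pow_pos hpos o')
  calc ((N : ℝ) - (o : ℝ) - (o' : ℝ)) ^ o'
      = ∏ _i ∈ Finset.range o', ((N : ℝ) - (o : ℝ) - (o' : ℝ)) := by
        rw [Finset.prod_const, Finset.card_range]
    _ ≤ ∏ i ∈ Finset.range o', ((N : ℝ) - (o : ℝ) - (i : ℝ)) := by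
        apply Finset.prod_le_prod (fun i _ => le_of_lt hpos)
        intro i hi
        have : (i : ℝ) ≤ (o' : ℝ) := by
          exact_mod_cast le_of_lt (Finset.mem_range.mp hi)
        linarith

lemma part2 (φ : ℝ) (hφ0 : 0 < φ) (hφ1 : φ < 1) (N k o : ℕ → ℕ)
    (ho : ∀ n, 0 < o n)
    (hk : ∀ n, o n + ⌈φ * (o n : ℝ)⌉₊ ≤ k n)
    (hkN : ∀ n, k n < N n)
    (hNo : Tendsto (fun n => ((o n : ℝ)) ^ 2 / (N n : ℝ)) atTop (nhds 0)) :
    Tendsto (fun n =>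
        (((N n - ⌈φ * (o n : ℝ)⌉₊ - o n).choose (k n - ⌈φ * (o n : ℝ)⌉₊ - o n) : ℝ)
            * ((N n : ℝ) - (o n : ℝ)) ^ (⌈φ * (o n : ℝ)⌉₊)
            * ((k n - o n - ⌈φ * (o n : ℝ)⌉₊).factorial : ℝ))
          / (((N n - o n).choose (k n - o n) : ℝ) * ((k n - o n).factorial : ℝ)))
      atTop (nhds 1) := by
  set o' : ℕ → ℕ := fun n => ⌈φ * (o n : ℝ)⌉₊ with ho'def
  have ho' : ∀ n, 0 < o' n := fun n =>
    Nat.ceil_pos.mpr (by have := ho n; positivity)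
  have ho'le : ∀ n, o' n ≤ o n := by
    intro n
    apply Nat.ceil_le.mpr
    have h1 : (0:ℝ) ≤ (o n : ℝ) := by positivity
    nlinarith
  have hk' : ∀ n, o n + o' n ≤ k n := fun n => hk n
  -- basic per-n positivity facts
  have hD : ∀ n, (0:ℝ) < (N n : ℝ) - (o n : ℝ) - (o' n : ℝ) := by
    intro n
    have h : o n + o' n < N n := lt_of_le_of_lt (hk n) (hkN n)
    have : (o n : ℝ) + (o' n : ℝ) < (N n : ℝ) := by exact_mod_cast h
    linarith
  have hNo' : ∀ n, (0:ℝ) < (N n : ℝ) - (o n : ℝ) := by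
    intro n
    have := hD n
    have : (0:ℝ) ≤ (o' n : ℝ) := by positivity
    linarith [hD n]
  have hdesc : ∀ n, (0:ℝ) < (((N n - o n).descFactorial (o' n) : ℕ) : ℝ) := by
    intro n
    have h : (N n - o n).descFactorial (o' n) ≠ 0 := by
      rw [Ne, Nat.descFactorial_eq_zero_iff_lt]
      have := hk' n; have := hkN n; have := ho'le n
      omega
    exact_mod_cast Nat.pos_of_ne_zero h
  have hEeq : ∀ n,
      (((N n - o' n - o n).choose (k n - o' n - o n) : ℝ)
          * ((N n : ℝ) - (o n : ℝ)) ^ (o' n)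
          * ((k n - o n - o' n).factorial : ℝ))
        / (((N n - o n).choose (k n - o n) : ℝ) * ((k n - o n).factorial : ℝ))
      = ((N n : ℝ) - (o n : ℝ)) ^ (o' n) / (((N n - o n).descFactorial (o' n) : ℕ) : ℝ) :=
    fun n => E_eq (N n) (k n) (o n) (o' n) (hk n) (hkN n)
  set g : ℕ → ℝ := fun n => (o' n : ℝ) ^ 2 / ((N n : ℝ) - (o n : ℝ) - (o' n : ℝ)) with hgdef
  -- lower bound
  have hlow : ∀ n, (1:ℝ) ≤
      (((N n - o' n - o n).choose (k n - o' n - o n) : ℝ)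
          * ((N n : ℝ) - (o n : ℝ)) ^ (o' n)
          * ((k n - o n - o' n).factorial : ℝ))
        / (((N n - o n).choose (k n - o n) : ℝ) * ((k n - o n).factorial : ℝ)) := by
    intro n
    rw [hEeq n, le_div_iff₀ (hdesc n), one_mul]
    have h1 : (N n - o n).descFactorial (o' n) ≤ (N n - o n) ^ (o' n) :=
      Nat.descFactorial_le_pow _ _
    have h2 : (((N n - o n) : ℕ) : ℝ) = (N n : ℝ) - (o n : ℝ) := by
      have : o n ≤ N n := by have := hk' n; have := hkN n; omega
      exact Nat.cast_sub this
    calc (((N n - o n).descFactorial (o' n) : ℕ) : ℝ)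
        ≤ ((((N n - o n) ^ (o' n)) : ℕ) : ℝ) := by exact_mod_cast h1
      _ = ((N n : ℝ) - (o n : ℝ)) ^ (o' n) := by rw [Nat.cast_pow, h2]
  -- upper bound
  have hup : ∀ n,
      (((N n - o' n - o n).choose (k n - o' n - o n) : ℝ)
          * ((N n : ℝ) - (o n : ℝ)) ^ (o' n)
          * ((k n - o n - o' n).factorial : ℝ))
        / (((N n - o n).choose (k n - o n) : ℝ) * ((k n - o n).factorial : ℝ))
      ≤ Real.exp (g n) := by
    intro n
    rw [hEeq n, ← prod_eq_desc (N n) (o n) (o' n)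
      (le_trans (hk n) (le_of_lt (hkN n)))]
    have step1 := part1 (N n) (k n) (o n) (o' n) (ho n) (ho' n) (hk n) (hkN n)
    refine le_trans step1 ?_
    have hDn := hD n
    have heq : ((N n : ℝ) - (o n : ℝ)) / ((N n : ℝ) - (o n : ℝ) - (o' n : ℝ))
        = 1 + (o' n : ℝ) / ((N n : ℝ) - (o n : ℝ) - (o' n : ℝ)) := by
      field_simp; ring
    rw [heq]
    set x : ℝ := (o' n : ℝ) / ((N n : ℝ) - (o n : ℝ) - (o' n : ℝ)) with hx
    have hx0 : 0 ≤ x := by positivity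
    calc (1 + x) ^ (o' n) ≤ Real.exp x ^ (o' n) := by
          apply pow_le_pow_left₀ (by linarith)
          linarith [Real.add_one_le_exp x]
      _ = Real.exp ((o' n : ℝ) * x) := by rw [Real.exp_nat_mul]
      _ = Real.exp (g n) := by
          congr 1
          rw [hgdef, hx]
          ring
  -- g tends to 0
  have hg0 : Tendsto g atTop (nhds 0) := by
    have hg2 : Tendsto (fun n => 2 * ((o n : ℝ) ^ 2 / (N n : ℝ))) atTop (nhds 0) := by
      simpa using hNo.const_mul 2
    apply squeeze_zero' (Eventually.of_forall (fun n => by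
      have := hD n; positivity)) ?_ hg2
    · have hev : ∀ᶠ n in atTop, ((o n : ℝ)) ^ 2 / (N n : ℝ) < 1/4 :=
        hNo.eventually_lt_const (by norm_num)
      filter_upwards [hev] with n hn
      have hN1 : (1:ℝ) ≤ (N n : ℝ) := by
        exact_mod_cast Nat.one_le_cast.mpr (by have := hkN n; omega)
      have hNpos : (0:ℝ) < (N n : ℝ) := by linarith
      have ho2 : (o n : ℝ) ^ 2 < (N n : ℝ) / 4 := by
        rw [div_lt_iff₀ hNpos] at hn; linarith
      have ho1 : (1:ℝ) ≤ (o n : ℝ) := by exact_mod_cast Nat.one_le_cast.mpr (ho n)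
      have hole : (o' n : ℝ) ≤ (o n : ℝ) := by exact_mod_cast ho'le n
      have hsum : (o n : ℝ) + (o' n : ℝ) ≤ 2 * (o n : ℝ) ^ 2 := by nlinarith
      have hDge : (N n : ℝ) / 2 ≤ (N n : ℝ) - (o n : ℝ) - (o' n : ℝ) := by nlinarith
      have h1 : g n ≤ (o n : ℝ) ^ 2 / ((N n : ℝ) / 2) := by
        apply div_le_div₀ (by positivity) (by nlinarith) (by linarith) hDge
      calc g n ≤ (o n : ℝ) ^ 2 / ((N n : ℝ) / 2) := h1
        _ = 2 * ((o n : ℝ) ^ 2 / (N n : ℝ)) := by field_simp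
  -- assemble
  have hexp : Tendsto (fun n => Real.exp (g n)) atTop (nhds 1) := by
    have := (Real.continuous_exp.tendsto 0).comp hg0
    rw [Real.exp_zero] at this; exact this
  exact tendsto_of_tendsto_of_tendsto_of_le_of_le tendsto_const_nhds hexp hlow hup


/-- `(N-o)^(o') / (N-o)_(o') ≤ ((N-o)/(N-o-o'))^(o')`, and consequently the
binomial ratio `C(N-o'-o, k-o'-o) (N-o)^(o') (k-o-o')! / (C(N-o, k-o) (k-o)!)`
tends to `1` as `o → ∞` with `o' = ⌈φ o⌉` for fixed `φ ∈ (0,1)` and `o²/N → 0`. -/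
theorem binomial_ratio_tendsto_one (φ : ℝ) (hφ0 : 0 < φ) (hφ1 : φ < 1) :
    (∀ N k o o' : ℕ, 0 < o → 0 < o' → o + o' ≤ k → k < N →
      ((N : ℝ) - (o : ℝ)) ^ o' / ∏ i ∈ Finset.range o', ((N : ℝ) - (o : ℝ) - (i : ℝ))
        ≤ (((N : ℝ) - (o : ℝ)) / ((N : ℝ) - (o : ℝ) - (o' : ℝ))) ^ o') ∧
    (∀ N k o : ℕ → ℕ,
      (∀ n, 0 < o n) →
      (∀ n, o n + ⌈φ * (o n : ℝ)⌉₊ ≤ k n) →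
      (∀ n, k n < N n) →
      Tendsto o atTop atTop →
      Tendsto (fun n => ((o n : ℝ)) ^ 2 / (N n : ℝ)) atTop (nhds 0) →
      Tendsto (fun n =>
          (((N n - ⌈φ * (o n : ℝ)⌉₊ - o n).choose (k n - ⌈φ * (o n : ℝ)⌉₊ - o n) : ℝ)
              * ((N n : ℝ) - (o n : ℝ)) ^ (⌈φ * (o n : ℝ)⌉₊)
              * ((k n - o n - ⌈φ * (o n : ℝ)⌉₊).factorial : ℝ))
            / (((N n - o n).choose (k n - o n) : ℝ) * ((k n - o n).factorial : ℝ)))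
        atTop (nhds 1)) := by
  constructor
  · intro N k o o' ho ho' hk hN
    exact part1 N k o o' ho ho' hk hN
  · intro N k o ho hk hkN _ hNo
    exact part2 φ hφ0 hφ1 N k o ho hk hkN hNo
end

section
/- Quasi-binomial normalization: for the levels model with shift λ, the sum over k from 0 to N-λ of binomial(N-λ, k) * p^k * (λ+1) * (k+λ+1)^(k-1) * (1-(k+λ+1)p)^(N-λ-k) equals 1, when p = 1/M with M > N. -/
open Finset Polynomial

lemma finite_diff : ∀ n : ℕ, ∀ i < n, ∀ x : ℝ,
    ∑ j ∈ range (n+1), (-1:ℝ)^j * (n.choose j) * (x + j)^i = 0 := by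
  intro n
  induction n with
  | zero => intro i hi; omega
  | succ n ih =>
    intro i hi x
    have hTsum : ∀ y : ℝ, ∑ j ∈ range (n+1), (-1:ℝ)^j * (n.choose j) * (y + j)^i
        = y^i + ∑ j ∈ range (n+1), (-1:ℝ)^(j+1) * (n.choose (j+1)) * (y + j + 1)^i := by
      intro y
      rw [Finset.sum_range_succ' (fun j => (-1:ℝ)^j * (n.choose j) * (y + j)^i) n,
          Finset.sum_range_succ (fun j => (-1:ℝ)^(j+1) * (n.choose (j+1)) * (y + j + 1)^i) n]
      simp only [Nat.choose_succ_self, Nat.cast_zero, mul_zero, zero_mul, add_zero,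
        Nat.choose_zero_right, Nat.cast_one, pow_zero]
      push_cast
      have hc : ∀ j ∈ range n, (-1:ℝ)^(j+1) * (n.choose (j+1)) * (y + ((j:ℝ)+1))^i
          = (-1:ℝ)^(j+1) * (n.choose (j+1)) * (y + j + 1)^i := by
        intro j _; ring_nf
      rw [Finset.sum_congr rfl hc]
      ring
    have step1 : ∑ j ∈ range (n+2), (-1:ℝ)^j * ((n+1).choose j) * (x + j)^i
        = x^i + ∑ j ∈ range (n+1), ((-1:ℝ)^(j+1) * (n.choose (j+1)) * (x + j + 1)^i
              + (-1:ℝ)^(j+1) * (n.choose j) * ((x+1) + j)^i) := by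
      rw [Finset.sum_range_succ' (fun j => (-1:ℝ)^j * ((n+1).choose j) * (x + j)^i) (n+1)]
      have h2 : ∀ j ∈ range (n+1), (-1:ℝ)^(j+1) * ((n+1).choose (j+1)) * (x + ((j:ℝ)+1))^i
          = (-1:ℝ)^(j+1) * (n.choose (j+1)) * (x + j + 1)^i
              + (-1:ℝ)^(j+1) * (n.choose j) * ((x+1) + j)^i := by
        intro j _
        rw [Nat.choose_succ_succ]
        push_cast
        ring
      push_cast
      rw [Finset.sum_congr rfl h2]
      simp [Nat.choose_zero_right]
      ring
    have step2 : ∑ j ∈ range (n+2), (-1:ℝ)^j * ((n+1).choose j) * (x + j)^i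
        = (∑ j ∈ range (n+1), (-1:ℝ)^j * (n.choose j) * (x + j)^i)
          - ∑ j ∈ range (n+1), (-1:ℝ)^j * (n.choose j) * ((x+1) + j)^i := by
      rw [step1, hTsum x, Finset.sum_add_distrib]
      have h3 : ∑ j ∈ range (n+1), (-1:ℝ)^(j+1) * (n.choose j) * ((x+1) + j)^i
          = - ∑ j ∈ range (n+1), (-1:ℝ)^j * (n.choose j) * ((x+1) + j)^i := by
        rw [← Finset.sum_neg_distrib]
        apply Finset.sum_congr rfl
        intro j _; ring
      rw [h3]; ring
    rw [step2]
    rcases Nat.lt_or_ge i n with h | h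
    · rw [ih i h x, ih i h (x+1)]; ring
    · have hin : i = n := by omega
      subst hin
      rw [← Finset.sum_sub_distrib]
      have h4 : ∀ j ∈ range (i+1),
          (-1:ℝ)^j * (i.choose j) * (x + j)^i - (-1:ℝ)^j * (i.choose j) * ((x+1) + j)^i
          = ∑ t ∈ range i, -((i.choose t : ℝ) * ((-1:ℝ)^j * (i.choose j) * (x + j)^t)) := by
        intro j _
        have hb : ((x + (j:ℝ)) + 1)^i = ∑ t ∈ range (i+1), (x + j)^t * 1^(i-t) * (i.choose t) :=
          add_pow (x + (j:ℝ)) 1 i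
        have hb' : ((x+1) + (j:ℝ))^i = ∑ t ∈ range (i+1), (x + j)^t * (i.choose t) := by
          rw [show (x+1) + (j:ℝ) = (x + j) + 1 by ring, hb]
          simp [one_pow]
        rw [hb', Finset.sum_range_succ]
        simp only [Nat.choose_self, Nat.cast_one]
        rw [show (-1:ℝ)^j * (i.choose j) * (x+j)^i - ((-1:ℝ)^j * (i.choose j) * (∑ t ∈ range i, (x + j)^t * (i.choose t) + (x+j)^i * 1))
            = -((-1:ℝ)^j * (i.choose j) * (∑ t ∈ range i, (x + j)^t * (i.choose t))) by ring]
        rw [Finset.mul_sum, ← Finset.sum_neg_distrib]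
        apply Finset.sum_congr rfl
        intro t _; ring
      rw [Finset.sum_congr rfl h4, Finset.sum_comm]
      apply Finset.sum_eq_zero
      intro t ht
      have := ih t (mem_range.mp ht) x
      have h5 : ∑ j ∈ range (i+1), -((i.choose t : ℝ) * ((-1:ℝ)^j * (i.choose j) * (x + j)^t))
          = -((i.choose t : ℝ) * ∑ j ∈ range (i+1), (-1:ℝ)^j * (i.choose j) * (x + j)^t) := by
        rw [Finset.mul_sum, ← Finset.sum_neg_distrib]
      rw [h5, this, mul_zero, neg_zero]

/-- Abel's binomial identity. -/
lemma abel_sum : ∀ n : ℕ, ∀ x y : ℝ,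
    (y + n)^n + ∑ k ∈ range n, (n.choose (k+1) : ℝ) * x * (x + k + 1)^k
        * (y + ((n - 1 - k : ℕ) : ℝ))^(n - 1 - k)
      = (x + y + n)^n := by
  intro n
  induction n with
  | zero => intro x y; simp
  | succ n ih =>
    intro x y
    -- polynomials in the variable standing for y
    set c : ℕ → ℝ := fun k => ((n+1).choose (k+1) : ℝ) * x * (x + k + 1)^k with hc
    set p : ℝ[X] := (X + C ((n:ℝ)+1))^(n+1)
        + ∑ k ∈ range (n+1), C (c k) * (X + C (((n - k : ℕ) : ℝ)))^(n-k) with hp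
    set q : ℝ[X] := (X + C (x + n + 1))^(n+1) with hq
    have hevalp : ∀ z : ℝ, p.eval z
        = (z + ((n:ℝ)+1))^(n+1) + ∑ k ∈ range (n+1), c k * (z + ((n - k : ℕ) : ℝ))^(n-k) := by
      intro z
      simp [hp, eval_finset_sum]
    have hevalq : ∀ z : ℝ, q.eval z = (z + (x + n + 1))^(n+1) := by
      intro z; simp [hq]
    -- derivative of p - q is zero
    have hder : derivative (p - q) = 0 := by
      apply Polynomial.funext
      intro z
      rw [map_sub]
      have hdp : derivative p = C ((n:ℝ)+1) * (X + C ((n:ℝ)+1))^n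
          + ∑ k ∈ range (n+1), C (c k) * (C (((n - k : ℕ) : ℝ)) * (X + C (((n - k : ℕ) : ℝ)))^(n-k-1)) := by
        rw [hp, map_add, map_sum]
        congr 1
        · rw [derivative_X_add_C_pow]; norm_num
        · apply Finset.sum_congr rfl
          intro k _
          rw [derivative_C_mul, derivative_X_add_C_pow]
      have hdq : derivative q = C ((n:ℝ)+1) * (X + C (x + n + 1))^n := by
        rw [hq, derivative_X_add_C_pow]; norm_num
      rw [hdp, hdq]
      simp only [eval_add, eval_mul, eval_pow, eval_C, eval_X, eval_sub, eval_finset_sum,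
        eval_zero]
      -- identify the sum with (n+1) * (IH sum at (x, z+1))
      have hsum : ∑ k ∈ range (n+1), c k * ((((n - k : ℕ) : ℝ)) * (z + ((n - k : ℕ) : ℝ))^(n-k-1))
          = ((n:ℝ)+1) * ∑ k ∈ range n, (n.choose (k+1) : ℝ) * x * (x + k + 1)^k
              * ((z+1) + ((n - 1 - k : ℕ) : ℝ))^(n - 1 - k) := by
        rw [Finset.sum_range_succ]
        simp only [Nat.sub_self, Nat.cast_zero, zero_mul, mul_zero, add_zero]
        rw [Finset.mul_sum]
        apply Finset.sum_congr rfl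
        intro k hk
        have hkn : k < n := mem_range.mp hk
        have h1 : n - k = (n - 1 - k) + 1 := by omega
        have h2 : n - k - 1 = n - 1 - k := by omega
        have hcomb : ((n+1).choose (k+1) : ℝ) * ((n - k : ℕ) : ℝ)
            = ((n:ℝ)+1) * (n.choose (k+1) : ℝ) := by
          have e1 : (n+1) * n.choose (k+1) = (n+1).choose (k+2) * (k+2) :=
            Nat.add_one_mul_choose_eq n (k+1)
          have e2 : (n+1).choose (k+1+1) * (k+1+1) = (n+1).choose (k+1) * (n+1 - (k+1)) :=
            Nat.choose_succ_right_eq (n+1) (k+1)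
          have e3 : (n+1).choose (k+1) * (n - k) = (n+1) * n.choose (k+1) := by
            rw [show n + 1 - (k+1) = n - k by omega] at e2
            rw [e1]
            exact e2.symm
          calc ((n+1).choose (k+1) : ℝ) * ((n - k : ℕ) : ℝ)
              = (((n+1).choose (k+1) * (n - k) : ℕ) : ℝ) := by push_cast; ring
            _ = (((n+1) * n.choose (k+1) : ℕ) : ℝ) := by rw [e3]
            _ = ((n:ℝ)+1) * (n.choose (k+1) : ℝ) := by push_cast; ring
        have h3 : (z + ((n - k : ℕ) : ℝ)) = (z+1) + ((n - 1 - k : ℕ) : ℝ) := by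
          rw [h1]; push_cast; ring
        rw [hc]
        rw [h2, h3]
        calc ((n+1).choose (k+1) : ℝ) * x * (x + k + 1)^k
              * (((n - k : ℕ) : ℝ) * ((z+1) + ((n - 1 - k : ℕ) : ℝ))^(n-1-k))
            = (((n+1).choose (k+1) : ℝ) * ((n - k : ℕ) : ℝ)) * (x * (x + k + 1)^k
              * ((z+1) + ((n - 1 - k : ℕ) : ℝ))^(n-1-k)) := by ring
          _ = _ := by rw [hcomb]; ring
      rw [hsum]
      have := ih x (z+1)
      have hgoal : ((n:ℝ)+1) * (z + ((n:ℝ)+1))^n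
          + ((n:ℝ)+1) * ∑ k ∈ range n, (n.choose (k+1) : ℝ) * x * (x + k + 1)^k
              * ((z+1) + ((n - 1 - k : ℕ) : ℝ))^(n - 1 - k)
          - ((n:ℝ)+1) * (z + (x + n + 1))^n = 0 := by
        have h4 : (z + ((n:ℝ)+1))^n = ((z+1) + (n:ℝ))^n := by ring_nf
        have h5 : (z + (x + (n:ℝ) + 1))^n = (x + (z+1) + (n:ℝ))^n := by ring_nf
        rw [h4, h5, ← this]
        ring
      linarith [hgoal]
    -- hence p - q is constant
    have hconst := Polynomial.eq_C_of_derivative_eq_zero hder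
    have hpq : ∀ z w : ℝ, p.eval z - q.eval z = p.eval w - q.eval w := by
      intro z w
      have hz := congrArg (Polynomial.eval z) hconst
      have hw := congrArg (Polynomial.eval w) hconst
      simp only [eval_sub, eval_C] at hz hw
      rw [hz, hw]
    -- evaluate at y0 = -x - (n+1)
    have hy0q : q.eval (-x - ((n:ℝ)+1)) = 0 := by
      rw [hevalq]
      rw [show (-x - ((n:ℝ)+1) + (x + n + 1)) = 0 by ring]
      simp
    have hy0p : p.eval (-x - ((n:ℝ)+1)) = 0 := by
      rw [hevalp]
      have h6 : ∀ k ∈ range (n+1),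
          c k * ((-x - ((n:ℝ)+1)) + ((n - k : ℕ) : ℝ))^(n-k)
          = x * ((-1:ℝ)^(n+1) * ((-1:ℝ)^(k+1) * ((n+1).choose (k+1) : ℝ) * (x + (k+1))^n)) := by
        intro k hk
        have hkn : k < n + 1 := mem_range.mp hk
        have h7 : ((-x - ((n:ℝ)+1)) + ((n - k : ℕ) : ℝ)) = -(x + (k+1)) := by
          have : ((n - k : ℕ) : ℝ) = (n : ℝ) - k := by
            rw [Nat.cast_sub (by omega)]
          rw [this]; ring
        rw [h7, hc]
        rw [neg_pow]
        have h8 : (x + (k:ℝ) + 1)^k * (x + ((k:ℝ)+1))^(n-k) = (x + ((k:ℝ)+1))^n := by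
          rw [show x + (k:ℝ) + 1 = x + ((k:ℝ)+1) by ring, ← pow_add]
          congr 1
          omega
        have h9 : (-1:ℝ)^(n-k) = (-1:ℝ)^(n+1) * (-1:ℝ)^(k+1) := by
          rw [← pow_add, show n+1+(k+1) = (n-k) + 2*(k+1) by omega, pow_add, pow_mul]
          norm_num
        calc ((n+1).choose (k+1) : ℝ) * x * (x + k + 1)^k * ((-1:ℝ)^(n-k) * (x + ((k:ℝ)+1))^(n-k))
            = (-1:ℝ)^(n-k) * ((n+1).choose (k+1) : ℝ) * x * ((x + k + 1)^k * (x + ((k:ℝ)+1))^(n-k)) := by ring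
          _ = (-1:ℝ)^(n-k) * ((n+1).choose (k+1) : ℝ) * x * (x + ((k:ℝ)+1))^n := by rw [h8]
          _ = _ := by rw [h9]; ring
      rw [Finset.sum_congr rfl h6]
      have hfd := finite_diff (n+1) n (by omega) x
      rw [Finset.sum_range_succ' (fun j => (-1:ℝ)^j * ((n+1).choose j : ℝ) * (x + j)^n) (n+1)] at hfd
      simp only [Nat.choose_zero_right, Nat.cast_one, pow_zero, one_mul, Nat.cast_zero, add_zero] at hfd
      -- hfd : ∑ k ∈ range (n+1), (-1)^(k+1) * C(n+1,k+1) * (x + ↑(k+1))^n + x^n = 0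
      rw [← Finset.mul_sum, ← Finset.mul_sum]
      have h12 : ∑ k ∈ range (n+1), (-1:ℝ)^(k+1) * ((n+1).choose (k+1) : ℝ) * (x + ((k:ℝ)+1))^n
          = - x^n := by
        have : ∀ k ∈ range (n+1), (-1:ℝ)^(k+1) * ((n+1).choose (k+1) : ℝ) * (x + (((k+1):ℕ):ℝ))^n
            = (-1:ℝ)^(k+1) * ((n+1).choose (k+1) : ℝ) * (x + ((k:ℝ)+1))^n := by
          intro k _; push_cast; ring
        rw [← Finset.sum_congr rfl this]
        linarith [hfd]
      rw [h12]
      have h13 : (-x - ((n:ℝ)+1) + ((n:ℝ)+1)) = -x := by ring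
      rw [h13, neg_pow]
      ring
    have := hpq y (-x - ((n:ℝ)+1))
    rw [hy0q, hy0p, hevalp, hevalq] at this
    have hfin : p.eval y = q.eval y := by rw [hevalp, hevalq]; linarith [this]
    rw [hevalp, hevalq] at hfin
    calc (y + ((n+1:ℕ):ℝ))^(n+1) + ∑ k ∈ range (n+1), ((n+1).choose (k+1) : ℝ) * x * (x + k + 1)^k
            * (y + ((n + 1 - 1 - k : ℕ) : ℝ))^(n + 1 - 1 - k)
        = (y + ((n:ℝ)+1))^(n+1) + ∑ k ∈ range (n+1), c k * (y + ((n - k : ℕ) : ℝ))^(n-k) := by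
          have hterm : ∀ k ∈ range (n+1), ((n+1).choose (k+1) : ℝ) * x * (x + k + 1)^k
              * (y + ((n + 1 - 1 - k : ℕ) : ℝ))^(n + 1 - 1 - k)
              = c k * (y + ((n - k : ℕ) : ℝ))^(n-k) := by
            intro k _
            rw [hc, show n + 1 - 1 - k = n - k by omega]
          rw [Finset.sum_congr rfl hterm]
          push_cast
          ring_nf
      _ = (y + (x + n + 1))^(n+1) := hfin
      _ = (x + y + ((n+1:ℕ):ℝ))^(n+1) := by push_cast; ring_nf

/-- Quasi-binomial normalization: for the levels model with shift `λ`,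
`∑_{k=0}^{N-λ} C(N-λ, k) p^k (λ+1) (k+λ+1)^(k-1) (1-(k+λ+1)p)^(N-λ-k) = 1`
when `p = 1/M`, `M > N`, `λ ≤ N`. -/
theorem quasi_binomial_normalization (N lam M : ℕ) (hlam : lam ≤ N) (hM : N < M)
    (p : ℝ) (hp : p = 1 / (M : ℝ)) :
    ∑ k ∈ Finset.range (N - lam + 1),
        ((N - lam).choose k : ℝ) * p ^ k * ((lam : ℝ) + 1)
          * ((k : ℝ) + (lam : ℝ) + 1) ^ ((k : ℤ) - 1)
          * (1 - ((k : ℝ) + (lam : ℝ) + 1) * p) ^ (N - lam - k)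
      = 1 := by
  have hMpos : 0 < M := by omega
  have hM0 : (0:ℝ) < (M:ℝ) := by exact_mod_cast hMpos
  have hpM : p * (M:ℝ) = 1 := by rw [hp]; field_simp
  have ha0 : ((lam:ℝ)+1) ≠ 0 := by positivity
  set n := N - lam with hn
  set Y : ℝ := (M:ℝ) - ((lam:ℝ)+1) - (n:ℝ) with hY
  have key := abel_sum n ((lam:ℝ)+1) Y
  rw [Finset.sum_range_succ' (fun k => ((n.choose k):ℝ) * p^k * ((lam:ℝ)+1)
      * ((k:ℝ)+(lam:ℝ)+1)^((k:ℤ)-1) * (1 - ((k:ℝ)+(lam:ℝ)+1)*p)^(n-k)) n]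
  have hsub : ∀ t : ℝ, 1 - t * p = p * ((M:ℝ) - t) := by
    intro t
    rw [mul_sub, hpM]
    ring
  have hterm : ∀ k ∈ range n, ((n.choose (k+1)):ℝ) * p^(k+1) * ((lam:ℝ)+1)
      * ((((k+1):ℕ):ℝ)+(lam:ℝ)+1)^((((k+1):ℕ):ℤ)-1)
      * (1 - ((((k+1):ℕ):ℝ)+(lam:ℝ)+1)*p)^(n-(k+1))
      = p^n * ((n.choose (k+1) : ℝ) * ((lam:ℝ)+1) * (((lam:ℝ)+1) + k + 1)^k
          * (Y + ((n - 1 - k : ℕ) : ℝ))^(n - 1 - k)) := by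
    intro k hk
    have hkn : k < n := mem_range.mp hk
    have hz : ((((k+1):ℕ):ℤ)-1) = (k:ℤ) := by push_cast; ring
    rw [hz, zpow_natCast]
    have hc1 : ((((k+1):ℕ):ℝ)+(lam:ℝ)+1) = ((lam:ℝ)+1) + k + 1 := by push_cast; ring
    rw [hc1]
    have hcast : ((n - 1 - k : ℕ):ℝ) = (n:ℝ) - 1 - k := by
      have h' : n - 1 - k = n - (1 + k) := by omega
      rw [h', Nat.cast_sub (by omega)]
      push_cast; ring
    have hc2 : 1 - (((lam:ℝ)+1) + k + 1)*p = p * (Y + ((n - 1 - k:ℕ):ℝ)) := by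
      rw [hsub, hcast, hY]
      ring
    rw [hc2, mul_pow]
    have hexp : n - (k+1) = n - 1 - k := by omega
    rw [hexp]
    have hpp : p^(k+1) * p^(n-1-k) = p^n := by
      rw [← pow_add]
      congr 1
      omega
    calc ((n.choose (k+1)):ℝ) * p^(k+1) * ((lam:ℝ)+1) * (((lam:ℝ)+1) + k + 1)^k
          * (p^(n-1-k) * (Y + ((n - 1 - k:ℕ):ℝ))^(n-1-k))
        = (p^(k+1) * p^(n-1-k)) * (((n.choose (k+1)):ℝ) * ((lam:ℝ)+1) * (((lam:ℝ)+1) + k + 1)^k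
          * (Y + ((n - 1 - k:ℕ):ℝ))^(n-1-k)) := by ring
      _ = _ := by rw [hpp]
  have h0 : ((n.choose 0):ℝ) * p^(0:ℕ) * ((lam:ℝ)+1) * (((0:ℕ):ℝ)+(lam:ℝ)+1)^(((0:ℕ):ℤ)-1)
      * (1 - (((0:ℕ):ℝ)+(lam:ℝ)+1)*p)^(n-0) = p^n * (Y + (n:ℝ))^n := by
    simp only [Nat.choose_zero_right, Nat.cast_one, pow_zero, one_mul, Nat.cast_zero,
      Nat.sub_zero, zero_add]
    rw [show ((0:ℤ)-1) = (-1:ℤ) by norm_num, zpow_neg_one]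
    have hc3 : 1 - ((lam:ℝ)+1)*p = p * (Y + (n:ℝ)) := by
      rw [hsub, hY]; ring
    rw [hc3, mul_pow]
    field_simp
  rw [Finset.sum_congr rfl hterm, h0, ← Finset.mul_sum]
  have hXYn : ((lam:ℝ)+1) + Y + (n:ℝ) = (M:ℝ) := by rw [hY]; ring
  calc p^n * (∑ k ∈ range n, ((n.choose (k+1) : ℝ) * ((lam:ℝ)+1) * (((lam:ℝ)+1) + k + 1)^k
          * (Y + ((n - 1 - k : ℕ) : ℝ))^(n - 1 - k))) + p^n * (Y + (n:ℝ))^n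
      = p^n * ((Y + (n:ℝ))^n + ∑ k ∈ range n, ((n.choose (k+1) : ℝ) * ((lam:ℝ)+1)
          * (((lam:ℝ)+1) + k + 1)^k * (Y + ((n - 1 - k : ℕ) : ℝ))^(n - 1 - k))) := by ring
    _ = p^n * (((lam:ℝ)+1) + Y + (n:ℝ))^n := by rw [key]
    _ = p^n * (M:ℝ)^n := by rw [hXYn]
    _ = (p * (M:ℝ))^n := by rw [mul_pow]
    _ = 1 := by rw [hpM, one_pow]
end

section
/- Small-input power law: for fixed integer λ₀ ≥ 0 and p = 1/(N+1), the quantity binomial(N-λ₀, k) * p^k * (λ₀+1) * (k+λ₀+1)^(k-1) * (1-(k+λ₀+1)p)^(N-λ₀-k) is Θ(k^(-3/2)) as N, k → ∞ with k/N → 0. -/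
open Real Filter

lemma stirling_two_sided : ∃ n₀ : ℕ, 1 ≤ n₀ ∧ ∀ n : ℕ, n₀ ≤ n →
    Real.sqrt (2*n) * ((n:ℝ) / Real.exp 1)^n ≤ n.factorial ∧
    (n.factorial : ℝ) ≤ 2 * (Real.sqrt (2*n) * ((n:ℝ) / Real.exp 1)^n) := by
  have h := Stirling.tendsto_stirlingSeq_sqrt_pi
  have h1 : (1:ℝ) < Real.sqrt π := by
    have := Real.pi_gt_three
    nlinarith [Real.sq_sqrt (le_of_lt Real.pi_pos), Real.sqrt_nonneg π]
  have h2 : Real.sqrt π < 2 := by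
    have := Real.pi_gt_three
    nlinarith [Real.sq_sqrt (le_of_lt Real.pi_pos), Real.sqrt_nonneg π, Real.pi_lt_d2]
  have hev := h.eventually (Ioo_mem_nhds h1 h2)
  obtain ⟨n₀, hn₀⟩ := Filter.eventually_atTop.mp hev
  refine ⟨n₀ + 1, by omega, ?_⟩
  intro n hn
  have hn1 : 1 ≤ n := by omega
  have hd : 0 < Real.sqrt (2*n) * ((n:ℝ) / Real.exp 1)^n := by
    have : (0:ℝ) < n := by exact_mod_cast hn1
    positivity
  have hs := hn₀ n (by omega)
  rw [Stirling.stirlingSeq] at hs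
  obtain ⟨hl, hr⟩ := hs
  constructor
  · rw [lt_div_iff₀ hd] at hl; linarith
  · rw [div_lt_iff₀ hd] at hr; linarith

lemma exp_neg_two_mul_le {x : ℝ} (h0 : 0 ≤ x) (h2 : x ≤ 1/2) :
    Real.exp (-(2*x)) ≤ 1 - x := by
  have he := Real.add_one_le_exp (2*x)
  calc Real.exp (-(2*x)) = 1 / Real.exp (2*x) := by
        rw [Real.exp_neg, one_div]
    _ ≤ 1 - x := by
        rw [div_le_iff₀ (Real.exp_pos _)]; nlinarith

set_option maxHeartbeats 2000000 in
/-- Small-input power law: for fixed integer `λ₀ ≥ 0` and `p = 1/(N+1)`, the quantity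
`C(N-λ₀, k) p^k (λ₀+1) (k+λ₀+1)^(k-1) (1-(k+λ₀+1)p)^(N-λ₀-k)` is `Θ(k^(-3/2))`
as `N, k → ∞` with `k/N → 0`. -/
theorem small_input_power_law (lam : ℕ) :
    ∃ c₁ c₂ : ℝ, 0 < c₁ ∧ 0 < c₂ ∧ ∃ K : ℕ, ∃ ε : ℝ, 0 < ε ∧
      ∀ N k : ℕ, K ≤ k → k + lam ≤ N → (k : ℝ) / (N : ℝ) ≤ ε →
        c₁ * (k : ℝ) ^ (-(3 / 2 : ℝ))
            ≤ ((N - lam).choose k : ℝ) * (1 / ((N : ℝ) + 1)) ^ k * ((lam : ℝ) + 1)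
                * ((k : ℝ) + (lam : ℝ) + 1) ^ ((k : ℤ) - 1)
                * (1 - ((k : ℝ) + (lam : ℝ) + 1) * (1 / ((N : ℝ) + 1))) ^ (N - lam - k) ∧
          ((N - lam).choose k : ℝ) * (1 / ((N : ℝ) + 1)) ^ k * ((lam : ℝ) + 1)
                * ((k : ℝ) + (lam : ℝ) + 1) ^ ((k : ℤ) - 1)
                * (1 - ((k : ℝ) + (lam : ℝ) + 1) * (1 / ((N : ℝ) + 1))) ^ (N - lam - k)
            ≤ c₂ * (k : ℝ) ^ (-(3 / 2 : ℝ)) := by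
  obtain ⟨n₀, hn₀1, hst⟩ := stirling_two_sided
  refine ⟨((lam:ℝ)+1) * Real.exp (-(2*((lam:ℝ)+1))) / (4 * Real.sqrt 2),
      2 * ((lam:ℝ)+1) * Real.exp ((lam:ℝ)+1), by positivity, by positivity,
      n₀ + 2*lam + 2, 1/4, by norm_num, ?_⟩
  intro N k hK hkN hkN4
  -- basic nat facts
  have hk1 : 1 ≤ k := by omega
  have hNpos : 0 < N := by omega
  have hkrpos : (0:ℝ) < k := by exact_mod_cast hk1
  have hNr : (0:ℝ) < N := by exact_mod_cast hNpos
  have hkN4' : (k:ℝ) ≤ (N:ℝ)/4 := by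
    rw [div_le_iff₀ hNr] at hkN4; linarith
  have hlamk : (lam:ℝ) ≤ k := by exact_mod_cast (by omega : lam ≤ k)
  have h2k : 2*k + lam ≤ N := by
    have : (2*(k:ℝ) + lam : ℝ) ≤ N := by linarith
    exact_mod_cast this
  set A := N - lam with hAdef
  set B := N - lam - k with hBdef
  have hAk : k ≤ A := by omega
  have hABk : A = B + k := by omega
  have hBk : k ≤ B := by omega
  have hAr : (A:ℝ) = (N:ℝ) - lam := by
    rw [hAdef, Nat.cast_sub (by omega)]
  have hBr : (B:ℝ) = (N:ℝ) - lam - k := by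
    rw [hBdef, Nat.cast_sub (by omega), Nat.cast_sub (by omega)]
  have hArpos : (0:ℝ) < A := by
    have : (1:ℕ) ≤ A := by omega
    exact_mod_cast this
  have hBrpos : (0:ℝ) < B := by
    have : (1:ℕ) ≤ B := by omega
    exact_mod_cast this
  have hkBr : (k:ℝ) ≤ B := by exact_mod_cast hBk
  have hBAr : (B:ℝ) ≤ A := by exact_mod_cast (by omega : B ≤ A)
  have hA2B : (A:ℝ) ≤ 2*B := by
    have : A ≤ 2*B := by omega
    exact_mod_cast this
  set n : ℝ := (N:ℝ) + 1 with hn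
  set m : ℝ := (k:ℝ) + lam + 1 with hm
  have hnpos : 0 < n := by positivity
  have hmpos : 0 < m := by positivity
  have hkm : (k:ℝ) ≤ m := by rw [hm]; linarith
  have hAn : (A:ℝ) ≤ n := by rw [hAr, hn]; linarith
  have hmB : m + B = n := by rw [hm, hBr, hn]; ring
  -- rewrite the expression
  set E := ((N - lam).choose k : ℝ) * (1 / ((N : ℝ) + 1)) ^ k * ((lam : ℝ) + 1)
                * ((k : ℝ) + (lam : ℝ) + 1) ^ ((k : ℤ) - 1)
                * (1 - ((k : ℝ) + (lam : ℝ) + 1) * (1 / ((N : ℝ) + 1))) ^ (N - lam - k) with hE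
  set P : ℝ := ((lam:ℝ)+1) * m^(k-1) * (B:ℝ)^B / n^A with hP
  have hPpos : 0 < P := by rw [hP]; positivity
  have hEP : E = P * ((A.factorial : ℝ)/(k.factorial * B.factorial)) := by
    rw [hE, hP]
    have hchoose : ((N - lam).choose k : ℝ) = (A.factorial : ℝ) / (k.factorial * B.factorial) := by
      rw [Nat.cast_choose ℝ hAk]
    have hz : ((k:ℝ) + lam + 1) ^ ((k:ℤ) - 1) = m ^ (k-1) := by
      rw [show ((k:ℤ)-1) = ((k-1:ℕ):ℤ) by omega, zpow_natCast, hm]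
    have hlast : 1 - ((k:ℝ) + lam + 1) * (1 / ((N:ℝ) + 1)) = (B:ℝ)/n := by
      rw [hn] at hmB ⊢
      field_simp
      linarith [hmB]
    rw [hchoose, hz, hlast, ← hBdef,
      show n^A = n^B * n^k by rw [hABk, pow_add]]
    rw [div_pow, div_pow, one_pow]
    field_simp
    ring
  -- Stirling bounds
  set L : ℕ → ℝ := fun x => Real.sqrt (2*x) * ((x:ℝ) / Real.exp 1)^x with hL
  have hLpos : ∀ x : ℕ, 1 ≤ x → 0 < L x := by
    intro x hx
    have : (0:ℝ) < x := by exact_mod_cast hx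
    rw [hL]; positivity
  obtain ⟨hA1, hA2⟩ := hst A (by omega)
  obtain ⟨hk1', hk2'⟩ := hst k (by omega)
  obtain ⟨hB1, hB2⟩ := hst B (by omega)
  have hLA := hLpos A (by omega)
  have hLk := hLpos k hk1
  have hLB := hLpos B (by omega)
  have hkfpos : (0:ℝ) < k.factorial := by exact_mod_cast k.factorial_pos
  have hBfpos : (0:ℝ) < B.factorial := by exact_mod_cast B.factorial_pos
  have hfrac_ub : (A.factorial : ℝ)/(k.factorial * B.factorial) ≤ 2 * (L A / (L k * L B)) := by
    rw [show 2 * (L A / (L k * L B)) = (2 * L A) / (L k * L B) by ring]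
    apply div_le_div₀ (by positivity) hA2 (by positivity)
    exact mul_le_mul hk1' hB1 hLB.le hkfpos.le
  have hfrac_lb : (L A / (L k * L B)) / 4 ≤ (A.factorial : ℝ)/(k.factorial * B.factorial) := by
    rw [show (L A / (L k * L B)) / 4 = L A / (4 * (L k * L B)) by ring]
    apply div_le_div₀ (by positivity) hA1 (by positivity)
    calc (k.factorial : ℝ) * B.factorial ≤ (2 * (L k)) * (2 * (L B)) :=
          mul_le_mul hk2' hB2 hBfpos.le (by positivity)
      _ = 4 * (L k * L B) := by ring
  -- the key algebraic identity
  set D : ℝ := ((lam:ℝ)+1) * (m^(k-1) / (k:ℝ)^k) * ((A:ℝ)/n)^A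
      * (Real.sqrt (2*A) / (Real.sqrt (2*k) * Real.sqrt (2*B))) with hD
  have hDpos : 0 < D := by
    rw [hD]
    have h2A : (0:ℝ) < 2*A := by positivity
    positivity
  have hkey : P * (L A / (L k * L B)) = D := by
    simp only [hP, hD, hL]
    have hexp : Real.exp 1 ^ A = Real.exp 1 ^ B * Real.exp 1 ^ k := by
      rw [hABk, pow_add]
    have hnA : n^A = n^B * n^k := by rw [hABk, pow_add]
    simp only [div_pow]
    rw [hexp, hnA]
    have h1 : Real.sqrt (2*(A:ℝ)) ≠ 0 := by positivity
    have h2 : Real.sqrt (2*(k:ℝ)) ≠ 0 := by positivity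
    have h3 : Real.sqrt (2*(B:ℝ)) ≠ 0 := by positivity
    have h4 : Real.exp 1 ≠ 0 := Real.exp_ne_zero 1
    have h5 : (B:ℝ)^B ≠ 0 := by positivity
    have h6 : (k:ℝ)^k ≠ 0 := by positivity
    have h7 : n ≠ 0 := ne_of_gt hnpos
    field_simp
  -- bounds on the factors of D
  have hmk_ub : m^(k-1) / (k:ℝ)^k ≤ Real.exp ((lam:ℝ)+1) / k := by
    have hmk : m^k ≤ Real.exp ((lam:ℝ)+1) * (k:ℝ)^k := by
      have h1 : m = (k:ℝ) * (1 + ((lam:ℝ)+1)/k) := by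
        rw [hm]; field_simp; ring
      have h2 : (1 + ((lam:ℝ)+1)/k)^k ≤ Real.exp ((lam:ℝ)+1) := by
        have h3 : 1 + ((lam:ℝ)+1)/k ≤ Real.exp (((lam:ℝ)+1)/k) := by
          have := Real.add_one_le_exp (((lam:ℝ)+1)/k)
          linarith
        calc (1 + ((lam:ℝ)+1)/k)^k ≤ (Real.exp (((lam:ℝ)+1)/k))^k := by
              apply pow_le_pow_left₀ (by positivity) h3
          _ = Real.exp (((lam:ℝ)+1)/k * k) := by rw [← Real.exp_nat_mul]; ring_nf
          _ = Real.exp ((lam:ℝ)+1) := by rw [div_mul_cancel₀]; exact ne_of_gt hkrpos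
      calc m^k = (k:ℝ)^k * (1 + ((lam:ℝ)+1)/k)^k := by rw [h1, mul_pow]
        _ ≤ (k:ℝ)^k * Real.exp ((lam:ℝ)+1) := by
            apply mul_le_mul_of_nonneg_left h2 (by positivity)
        _ = Real.exp ((lam:ℝ)+1) * (k:ℝ)^k := by ring
    have hmk1 : m^(k-1) * m = m^k := by
      rw [← pow_succ]; congr 1; omega
    rw [div_le_div_iff₀ (by positivity) hkrpos]
    calc m^(k-1) * (k:ℝ) ≤ m^(k-1) * m := by
          apply mul_le_mul_of_nonneg_left hkm (by positivity)
      _ = m^k := hmk1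
      _ ≤ Real.exp ((lam:ℝ)+1) * (k:ℝ)^k := hmk
  have hmk_lb : 1/(k:ℝ) ≤ m^(k-1)/(k:ℝ)^k := by
    rw [div_le_div_iff₀ hkrpos (by positivity)]
    calc 1 * (k:ℝ)^k = (k:ℝ)^(k-1) * k := by
          rw [one_mul, ← pow_succ]; congr 1; omega
      _ ≤ m^(k-1) * k :=
          mul_le_mul_of_nonneg_right (pow_le_pow_left₀ hkrpos.le hkm _) hkrpos.le
  have hAnA_ub : ((A:ℝ)/n)^A ≤ 1 :=
    pow_le_one₀ (by positivity) ((div_le_one hnpos).mpr hAn)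
  have hAnA_lb : Real.exp (-(2*((lam:ℝ)+1))) ≤ ((A:ℝ)/n)^A := by
    set x : ℝ := ((lam:ℝ)+1)/n with hx
    have hx0 : 0 ≤ x := by positivity
    have hx12 : x ≤ 1/2 := by
      rw [hx, div_le_div_iff₀ hnpos (by norm_num)]
      have hklam2 : (2:ℝ)*lam + 2 ≤ k := by
        exact_mod_cast (by omega : 2*lam + 2 ≤ k)
      rw [hn]; linarith
    have hAn' : (A:ℝ)/n = 1 - x := by
      rw [hx, hAr, hn]; field_simp; ring
    have h1x : Real.exp (-(2*x)) ≤ 1 - x := exp_neg_two_mul_le hx0 hx12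
    have hAxn : x * A ≤ (lam:ℝ)+1 := by
      rw [hx, div_mul_eq_mul_div, div_le_iff₀ hnpos]
      exact mul_le_mul_of_nonneg_left hAn (by positivity)
    calc Real.exp (-(2*((lam:ℝ)+1))) ≤ Real.exp ((A:ℕ) * (-(2*x))) := by
          apply Real.exp_le_exp.mpr
          have h2' : (2:ℝ)*(x*A) ≤ 2*((lam:ℝ)+1) := by linarith
          have h3' : (A:ℝ)*(-(2*x)) = -(2*(x*A)) := by ring
          rw [h3']; linarith
      _ = (Real.exp (-(2*x)))^A := Real.exp_nat_mul _ A
      _ ≤ ((A:ℝ)/n)^A := by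
          apply pow_le_pow_left₀ (Real.exp_pos _).le
          rw [hAn']; exact h1x
  have hsqk : Real.sqrt (2*(k:ℝ)) * Real.sqrt (2*(B:ℝ)) = Real.sqrt ((2*(k:ℝ))*(2*(B:ℝ))) :=
    (Real.sqrt_mul (by positivity) _).symm
  have hsq_ub : Real.sqrt (2*(A:ℝ)) / (Real.sqrt (2*(k:ℝ)) * Real.sqrt (2*(B:ℝ)))
      ≤ 1/Real.sqrt k := by
    rw [hsqk, ← Real.sqrt_div (by positivity),
      show (1:ℝ)/Real.sqrt k = Real.sqrt (1/(k:ℝ)) by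
        rw [one_div, one_div, ← Real.sqrt_inv]]
    apply Real.sqrt_le_sqrt
    rw [div_le_div_iff₀ (by positivity) hkrpos]
    have := mul_le_mul_of_nonneg_right hA2B hkrpos.le
    linarith
  have hsq_lb : 1/(Real.sqrt 2 * Real.sqrt k)
      ≤ Real.sqrt (2*(A:ℝ)) / (Real.sqrt (2*(k:ℝ)) * Real.sqrt (2*(B:ℝ))) := by
    rw [hsqk, ← Real.sqrt_div (by positivity),
      show Real.sqrt 2 * Real.sqrt (k:ℝ) = Real.sqrt (2*(k:ℝ)) from
        (Real.sqrt_mul (by norm_num) _).symm,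
      show (1:ℝ)/Real.sqrt (2*(k:ℝ)) = Real.sqrt (1/(2*(k:ℝ))) by
        rw [one_div, one_div, ← Real.sqrt_inv]]
    apply Real.sqrt_le_sqrt
    rw [div_le_div_iff₀ (by positivity) (by positivity)]
    have := mul_le_mul_of_nonneg_left hBAr (by positivity : (0:ℝ) ≤ 4*k)
    linarith
  have hk32 : (k:ℝ)^(-(3/2:ℝ)) = 1/((k:ℝ) * Real.sqrt k) := by
    rw [Real.rpow_neg hkrpos.le, show (3/2:ℝ) = 1 + 1/2 by norm_num,
      Real.rpow_add hkrpos, Real.rpow_one, ← Real.sqrt_eq_rpow, one_div]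
  have hEub : E ≤ 2 * ((lam:ℝ)+1) * Real.exp ((lam:ℝ)+1) * (k:ℝ)^(-(3/2:ℝ)) := by
    calc E = P * ((A.factorial : ℝ)/(k.factorial * B.factorial)) := hEP
      _ ≤ P * (2 * (L A / (L k * L B))) := mul_le_mul_of_nonneg_left hfrac_ub hPpos.le
      _ = 2 * D := by rw [← hkey]; ring
      _ ≤ 2 * (((lam:ℝ)+1) * (Real.exp ((lam:ℝ)+1)/k) * 1 * (1/Real.sqrt k)) := by
          rw [hD]
          gcongr <;> first | exact hmk_ub | exact hAnA_ub | exact hsq_ub | positivity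
      _ = 2 * ((lam:ℝ)+1) * Real.exp ((lam:ℝ)+1) * (k:ℝ)^(-(3/2:ℝ)) := by
          rw [hk32]; have h := Real.sqrt_nonneg (k:ℝ); field_simp
  have hElb : ((lam:ℝ)+1) * Real.exp (-(2*((lam:ℝ)+1))) / (4 * Real.sqrt 2)
      * (k:ℝ)^(-(3/2:ℝ)) ≤ E := by
    have hs2 : (0:ℝ) < Real.sqrt 2 := by positivity
    have hsk : (0:ℝ) < Real.sqrt k := Real.sqrt_pos.mpr hkrpos
    calc ((lam:ℝ)+1) * Real.exp (-(2*((lam:ℝ)+1))) / (4 * Real.sqrt 2) * (k:ℝ)^(-(3/2:ℝ))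
        = (((lam:ℝ)+1) * (1/(k:ℝ)) * Real.exp (-(2*((lam:ℝ)+1)))
            * (1/(Real.sqrt 2 * Real.sqrt k))) / 4 := by
          rw [hk32]; field_simp
      _ ≤ D / 4 := by
          rw [hD]
          gcongr (((lam:ℝ)+1) * ?_ * ?_ * ?_)/4 <;>
            first | exact hmk_lb | exact hAnA_lb | exact hsq_lb
      _ = P * ((L A / (L k * L B)) / 4) := by rw [← hkey]; ring
      _ ≤ P * ((A.factorial : ℝ)/(k.factorial * B.factorial)) :=
          mul_le_mul_of_nonneg_left hfrac_lb hPpos.le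
      _ = E := hEP.symm
  exact ⟨hElb, hEub⟩
end
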